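/- arXiv:2112.07271 — 11 statements merged into one kernel-verified Lean document; each statement's English description precedes it below -/
import Mathlib

section
/- Let A be an abelian group and (j_a)_{a∈A} a family of elements of A with j_a = j_{-a} for all a. Define σ_{(a1,a2)}(c1,c2) = (c1 + a2, c2 - j_{c1+a2-a1}) on A². Then the map r on A² × A² defined by r((a1,a2),(c1,c2)) = (σ_{(a1,a2)}(c1,c2), σ^{-1}_{σ_{(a1,a2)}(c1,c2)}(a1,a2)) is an involutive non-degenerate set-theoretic solution of the Yang–Baxter equation; equivalently, the braiding relation σ_{(a1,a2)} ∘ σ_{σ^{-1}_{(a1,a2)}(c1,c2)} = σ_{(c1,c2)} ∘ σ_{σ^{-1}_{(c1,c2)}(a1,a2)} holds for all a1,a2,c1,c2 ∈ A. -/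
/-- The map σ_{(a1,a2)}(c1,c2) = (c1 + a2, c2 - j_{c1+a2-a1}). -/
def sigmaFun {A : Type} [AddCommGroup A] (j : A → A) (a c : A × A) : A × A :=
  (c.1 + a.2, c.2 - j (c.1 + a.2 - a.1))

/-- The inverse map σ⁻¹_{(a1,a2)}(c1,c2) = (c1 - a2, c2 + j_{c1-a1}). -/
def sigmaInv {A : Type} [AddCommGroup A] (j : A → A) (a c : A × A) : A × A :=
  (c.1 - a.2, c.2 + j (c.1 - a.1))

/-- σ_{(a1,a2)} as a permutation of A². -/
def sigmaPerm {A : Type} [AddCommGroup A] (j : A → A) (a : A × A) : Equiv.Perm (A × A) where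
  toFun := sigmaFun j a
  invFun := sigmaInv j a
  left_inv := fun c => by cases c; simp [sigmaFun, sigmaInv]
  right_inv := fun c => by cases c; simp [sigmaFun, sigmaInv]

/-- The map r((a1,a2),(c1,c2)) = (σ_{(a1,a2)}(c1,c2), σ⁻¹_{σ_{(a1,a2)}(c1,c2)}(a1,a2)). -/
def rj {A : Type} [AddCommGroup A] (j : A → A) (p : (A × A) × (A × A)) : (A × A) × (A × A) :=
  (sigmaFun j p.1 p.2, sigmaInv j (sigmaFun j p.1 p.2) p.1)

/-- r × id on X³. -/
def r12 {X : Type} (r : X × X → X × X) : X × X × X → X × X × X :=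
  fun t => ((r (t.1, t.2.1)).1, (r (t.1, t.2.1)).2, t.2.2)

/-- id × r on X³. -/
def r23 {X : Type} (r : X × X → X × X) : X × X × X → X × X × X :=
  fun t => (t.1, r (t.2.1, t.2.2))

/-- Involutive non-degenerate set-theoretic solution of the Yang–Baxter equation. -/
def IsSolution {X : Type} (r : X × X → X × X) : Prop :=
  Function.Involutive r ∧
  (∀ x, Function.Bijective fun y => (r (x, y)).1) ∧
  (∀ y, Function.Bijective fun x => (r (x, y)).2) ∧
  r12 r ∘ r23 r ∘ r12 r = r23 r ∘ r12 r ∘ r23 r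

/-- Homomorphism of solutions (determined by the σ-compatibility condition). -/
def IsSolHom {X Y : Type} (r : X × X → X × X) (s : Y × Y → Y × Y) (f : X → Y) : Prop :=
  ∀ x y : X, f ((r (x, y)).1) = (s (f x, f y)).1

/-- A solution is simple if |X| > 1 and every epimorphism of solutions from it
is an isomorphism or has a one-element target. -/
def IsSimpleSol {X : Type} (r : X × X → X × X) : Prop :=
  Nontrivial X ∧ ∀ (Y : Type) (s : Y × Y → Y × Y), IsSolution s →
    ∀ f : X → Y, IsSolHom r s f → Function.Surjective f →
      Function.Bijective f ∨ Subsingleton Y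

/-- The chain of subgroups V_{a,1} ⊆ V_{a,2} ⊆ ⋯ (indexed from 0). -/
def Vchain {A : Type} [AddCommGroup A] (j : A → A) (a : A) : ℕ → AddSubgroup A
  | 0 => AddSubgroup.closure {x | ∃ c, x = j c - j (c + a)}
  | n + 1 => Vchain j a n ⊔
      AddSubgroup.closure {x | ∃ c, ∃ v ∈ Vchain j a n, x = j c - j (c + v)}

lemma rj_eq {A : Type} [AddCommGroup A] (j : A → A) (hj : ∀ a : A, j (-a) = j a)
    (x y : A × A) :
    rj j (x, y) = ((y.1 + x.2, y.2 - j (y.1 + x.2 - x.1)),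
      (x.1 - y.2 + j (y.1 + x.2 - x.1), x.2 + j (y.1 + x.2 - x.1))) := by
  show ((_,_),(x.1 - (y.2 - j (y.1 + x.2 - x.1)), x.2 + j (x.1 - (y.1 + x.2)))) = _
  rw [show x.1 - (y.1 + x.2) = -(y.1 + x.2 - x.1) by abel, hj,
    show x.1 - (y.2 - j (y.1 + x.2 - x.1)) = x.1 - y.2 + j (y.1 + x.2 - x.1) by abel]

/-- (A², r) is an involutive non-degenerate solution of the YBE, and the
braiding relation σ_a ∘ σ_{σ⁻¹_a(c)} = σ_c ∘ σ_{σ⁻¹_c(a)} holds. -/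
theorem statement0 {A : Type} [AddCommGroup A] (j : A → A) (hj : ∀ a : A, j (-a) = j a) :
    IsSolution (rj j) ∧
    ∀ a c : A × A,
      sigmaFun j a ∘ sigmaFun j (sigmaInv j a c) = sigmaFun j c ∘ sigmaFun j (sigmaInv j c a) := by
  constructor
  · refine ⟨?_, ?_, ?_, ?_⟩
    · -- involutive
      intro p
      obtain ⟨x, y⟩ := p
      rw [rj_eq j hj, rj_eq j hj]
      simp only
      rw [show x.1 - y.2 + j (y.1 + x.2 - x.1) + (y.2 - j (y.1 + x.2 - x.1)) - (y.1 + x.2)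
          = -(y.1 + x.2 - x.1) by abel, hj]
      simp only [Prod.ext_iff]
      refine ⟨⟨?_, ?_⟩, ?_, ?_⟩ <;> abel
    · -- left nondegeneracy
      intro x
      have h : (fun y => (rj j (x, y)).1) = sigmaPerm j x := by funext y; rfl
      rw [h]
      exact (sigmaPerm j x).bijective
    · -- right nondegeneracy
      intro y
      have hfun : (fun x => (rj j (x, y)).2)
          = fun x : A × A => (x.1 - y.2 + j (y.1 + x.2 - x.1), x.2 + j (y.1 + x.2 - x.1)) := by
        funext x; rw [rj_eq j hj]
      rw [hfun]
      apply Function.bijective_iff_has_inverse.mpr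
      refine ⟨fun d => (d.1 + y.2 - j (y.1 + d.2 - d.1 - y.2), d.2 - j (y.1 + d.2 - d.1 - y.2)),
        ?_, ?_⟩
      · intro x
        simp only
        rw [show y.1 + (x.2 + j (y.1 + x.2 - x.1)) - (x.1 - y.2 + j (y.1 + x.2 - x.1)) - y.2
            = y.1 + x.2 - x.1 by abel]
        simp only [Prod.ext_iff]
        refine ⟨?_, ?_⟩ <;> abel
      · intro d
        simp only
        rw [show y.1 + (d.2 - j (y.1 + d.2 - d.1 - y.2)) -
            (d.1 + y.2 - j (y.1 + d.2 - d.1 - y.2)) = y.1 + d.2 - d.1 - y.2 by abel]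
        simp only [Prod.ext_iff]
        refine ⟨?_, ?_⟩ <;> abel
    · -- YBE
      funext t
      obtain ⟨a, b, c⟩ := t
      simp only [Function.comp, r12, r23, rj_eq j hj, Prod.ext_iff]
      and_intros <;> abel_nf
  · -- braiding relation
    intro a c
    funext x
    have hflip : j (c.1 - a.1) = j (a.1 - c.1) := by
      rw [show c.1 - a.1 = -(a.1 - c.1) by abel, hj]
    simp only [Function.comp, sigmaFun, sigmaInv, hflip, Prod.ext_iff]
    and_intros <;> abel_nf
end

section
/- The solution (A², r) is indecomposable (i.e., the group generated by all σ_{(a1,a2)} acts transitively on A²) if and only if the subgroup of A generated by {j_a : a ∈ A} equals A. -/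
private lemma step_sub {A : Type} [AddCommGroup A] (j : A → A) (x : A × A) (b t : A) :
    ∃ g ∈ Subgroup.closure (Set.range (sigmaPerm j)), g x = (b, x.2 - j t) := by
  refine ⟨sigmaPerm j (b - t, b - x.1), Subgroup.subset_closure ⟨_, rfl⟩, ?_⟩
  show sigmaFun j (b - t, b - x.1) x = _
  unfold sigmaFun
  have h1 : x.1 + (b - x.1) = b := by abel
  rw [Prod.mk.injEq, h1]
  exact ⟨rfl, by rw [sub_sub_cancel]⟩

private lemma step_add {A : Type} [AddCommGroup A] (j : A → A) (x : A × A) (b t : A) :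
    ∃ g ∈ Subgroup.closure (Set.range (sigmaPerm j)), g x = (b, x.2 + j t) := by
  refine ⟨(sigmaPerm j (x.1 - t, x.1 - b))⁻¹,
    inv_mem (Subgroup.subset_closure ⟨_, rfl⟩), ?_⟩
  show sigmaInv j (x.1 - t, x.1 - b) x = _
  unfold sigmaInv
  rw [Prod.mk.injEq, sub_sub_cancel, sub_sub_cancel]
  exact ⟨rfl, rfl⟩

private lemma reach {A : Type} [AddCommGroup A] (j : A → A) {s : A}
    (hs : s ∈ AddSubgroup.closure (Set.range j)) :
    ∀ x : A × A, ∀ b : A, ∃ g ∈ Subgroup.closure (Set.range (sigmaPerm j)),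
      g x = (b, x.2 + s) := by
  induction hs using AddSubgroup.closure_induction with
  | mem t ht =>
    obtain ⟨c, rfl⟩ := ht
    intro x b
    exact step_add j x b c
  | zero =>
    intro x b
    obtain ⟨g1, hg1, hg1x⟩ := step_sub j x b 0
    obtain ⟨g2, hg2, hg2x⟩ := step_add j (g1 x) b 0
    refine ⟨g2 * g1, mul_mem hg2 hg1, ?_⟩
    show g2 (g1 x) = _
    rw [hg2x, hg1x]
    simp
  | add s1 s2 _ _ ih1 ih2 =>
    intro x b
    obtain ⟨g1, hg1, hg1x⟩ := ih2 x b
    obtain ⟨g2, hg2, hg2x⟩ := ih1 (g1 x) b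
    refine ⟨g2 * g1, mul_mem hg2 hg1, ?_⟩
    show g2 (g1 x) = _
    rw [hg2x, hg1x]
    simp [add_assoc, add_comm s1 s2]
  | neg s _ ih =>
    intro x b
    obtain ⟨g, hg, hgx⟩ := ih (b, x.2 - s) x.1
    refine ⟨g⁻¹, inv_mem hg, ?_⟩
    have h1 : g (b, x.2 - s) = x := by
      rw [hgx]; simp
    have h2 : g⁻¹ x = (b, x.2 - s) := by
      rw [Equiv.Perm.inv_def, Equiv.symm_apply_eq]
      exact h1.symm
    rw [h2, sub_eq_add_neg]

/-- (A², r) is indecomposable (the group generated by the σ's acts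
transitively on A²) iff the subgroup of A generated by {j_a : a ∈ A} is all of A. -/
theorem statement2 {A : Type} [AddCommGroup A] (j : A → A) (hj : ∀ a : A, j (-a) = j a) :
    (∀ x y : A × A, ∃ g ∈ Subgroup.closure (Set.range (sigmaPerm j)), g x = y) ↔
      AddSubgroup.closure (Set.range j) = ⊤ := by
  constructor
  · intro htrans
    have key : ∀ g ∈ Subgroup.closure (Set.range (sigmaPerm j)), ∀ p : A × A,
        (g p).2 - p.2 ∈ AddSubgroup.closure (Set.range j) := by
      intro g hg
      induction hg using Subgroup.closure_induction with
      | mem g hg =>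
        obtain ⟨a, rfl⟩ := hg
        intro p
        have : (sigmaPerm j a p).2 - p.2 = -(j (p.1 + a.2 - a.1)) := by
          show (sigmaFun j a p).2 - p.2 = _
          unfold sigmaFun
          exact sub_sub_cancel_left _ _
        rw [this]
        exact neg_mem (AddSubgroup.subset_closure ⟨_, rfl⟩)
      | one => intro p; simp
      | mul g h _ _ ihg ihh =>
        intro p
        have : ((g * h) p).2 - p.2 = ((g (h p)).2 - (h p).2) + ((h p).2 - p.2) := by
          simp
        rw [this]
        exact add_mem (ihg _) (ihh _)
      | inv g _ ih =>
        intro p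
        have h1 := ih (g⁻¹ p)
        have h2 : g (g⁻¹ p) = p := by simp
        rw [h2] at h1
        have : (g⁻¹ p).2 - p.2 = -(p.2 - (g⁻¹ p).2) := by abel
        rw [this]
        exact neg_mem h1
    rw [eq_top_iff]
    intro a _
    obtain ⟨g, hg, hgx⟩ := htrans (0, 0) (0, a)
    have := key g hg (0, 0)
    rw [hgx] at this
    simpa using this
  · intro htop x y
    have hs : y.2 - x.2 ∈ AddSubgroup.closure (Set.range j) := by
      rw [htop]; trivial
    obtain ⟨g, hg, hgx⟩ := reach j hs x y.1
    refine ⟨g, hg, ?_⟩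
    rw [hgx]
    simp
end

section
/- The orbit of (0,0) under the action of the group generated by {σ_{(a1,a2)} : a1,a2 ∈ A} on A² is exactly A × W, where W is the subgroup of A generated by {j_a : a ∈ A}. -/
/-- the orbit of (0,0) under the group generated by the σ's is A × W,
where W = ⟨j_a : a ∈ A⟩. -/
theorem statement3 {A : Type} [AddCommGroup A] (j : A → A) (hj : ∀ a : A, j (-a) = j a) :
    {x : A × A | ∃ g ∈ Subgroup.closure (Set.range (sigmaPerm j)), g (0, 0) = x} =
      (Set.univ : Set A) ×ˢ (AddSubgroup.closure (Set.range j) : Set A) := by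
  set W := AddSubgroup.closure (Set.range j) with hW
  set H := Subgroup.closure (Set.range (sigmaPerm j)) with hH
  set O : Set (A × A) := {x : A × A | ∃ g ∈ H, g (0, 0) = x} with hO
  have sigma_apply : ∀ a c, sigmaPerm j a c = sigmaFun j a c := fun _ _ => rfl
  have sigma_inv_apply : ∀ a c, (sigmaPerm j a)⁻¹ c = sigmaInv j a c := fun _ _ => rfl
  -- forward inclusion
  have fwd : ∀ g ∈ H, ∀ c : A × A, c.2 ∈ W → (g c).2 ∈ W ∧ (g⁻¹ c).2 ∈ W := by
    intro g hg
    induction hg using Subgroup.closure_induction with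
    | mem g hgmem =>
      obtain ⟨a, rfl⟩ := hgmem
      intro c hc
      refine ⟨?_, ?_⟩
      · rw [sigma_apply]
        exact sub_mem hc (AddSubgroup.subset_closure ⟨_, rfl⟩)
      · rw [sigma_inv_apply]
        exact add_mem hc (AddSubgroup.subset_closure ⟨_, rfl⟩)
    | one => intro c hc; rw [inv_one]; exact ⟨hc, hc⟩
    | mul g h _ _ ihg ihh =>
      intro c hc
      constructor
      · rw [Equiv.Perm.mul_apply]
        exact (ihg _ (ihh c hc).1).1
      · rw [mul_inv_rev, Equiv.Perm.mul_apply]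
        exact (ihh _ (ihg c hc).2).2
    | inv g _ ih =>
      intro c hc
      refine ⟨(ih c hc).2, ?_⟩
      rw [inv_inv]
      exact (ih c hc).1
  -- orbit is closed under applying sigma and its inverse
  have stepF : ∀ a p, p ∈ O → sigmaFun j a p ∈ O := by
    rintro a p ⟨g, hg, rfl⟩
    exact ⟨sigmaPerm j a * g,
      mul_mem (Subgroup.subset_closure ⟨a, rfl⟩) hg, by rw [Equiv.Perm.mul_apply]; rfl⟩
  have stepI : ∀ a p, p ∈ O → sigmaInv j a p ∈ O := by
    rintro a p ⟨g, hg, rfl⟩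
    exact ⟨(sigmaPerm j a)⁻¹ * g,
      mul_mem (inv_mem (Subgroup.subset_closure ⟨a, rfl⟩)) hg,
      by rw [Equiv.Perm.mul_apply]; rfl⟩
  -- from any orbit point, we can add or subtract j b in the second coordinate,
  -- and move the first coordinate arbitrarily
  have addStep : ∀ (b x1 : A) (p : A × A), p ∈ O → (x1, p.2 + j b) ∈ O := by
    intro b x1 p hp
    have := stepI (p.1 - b, p.1 - x1) p hp
    simpa [sigmaInv] using this
  have subStep : ∀ (b x1 : A) (p : A × A), p ∈ O → (x1, p.2 - j b) ∈ O := by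
    intro b x1 p hp
    have := stepF (x1 - b, x1 - p.1) p hp
    simpa [sigmaFun] using this
  -- key: for w ∈ W we can add or subtract w
  have key : ∀ w ∈ W, ∀ (x1 : A) (p : A × A), p ∈ O →
      (x1, p.2 + w) ∈ O ∧ (x1, p.2 - w) ∈ O := by
    intro w hw
    induction hw using AddSubgroup.closure_induction with
    | mem w hwmem =>
      obtain ⟨b, rfl⟩ := hwmem
      intro x1 p hp
      exact ⟨addStep b x1 p hp, subStep b x1 p hp⟩
    | zero =>
      intro x1 p hp
      have h0 := addStep 0 x1 _ (subStep 0 0 p hp)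
      simp only [sub_add_cancel] at h0
      simpa using h0
    | add w1 w2 _ _ ih1 ih2 =>
      intro x1 p hp
      constructor
      · have := (ih2 x1 _ (ih1 0 p hp).1).1
        simpa [add_assoc] using this
      · have := (ih2 x1 _ (ih1 0 p hp).2).2
        simpa [sub_sub] using this
    | neg w _ ih =>
      intro x1 p hp
      refine ⟨?_, ?_⟩
      · have := (ih x1 p hp).2
        simpa [sub_eq_add_neg] using this
      · have := (ih x1 p hp).1
        simpa [sub_neg_eq_add] using this
  ext x
  simp only [Set.mem_setOf_eq, Set.mem_prod, Set.mem_univ, true_and, SetLike.mem_coe]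
  constructor
  · rintro ⟨g, hg, rfl⟩
    exact (fwd g hg (0, 0) (zero_mem W)).1
  · intro hx2
    have h00 : ((0, 0) : A × A) ∈ O := ⟨1, one_mem H, rfl⟩
    have := (key x.2 hx2 x.1 (0, 0) h00).1
    simpa using this
end

section
/- The solution (A², r) is irretractable (i.e., σ_{(a1,a2)} = σ_{(c1,c2)} implies (a1,a2) = (c1,c2)) if and only if for every nonzero a ∈ A there exists c ∈ A such that j_c ≠ j_{c+a}. -/
/-- (A², r) is irretractable iff for every nonzero a ∈ A there is c with
j_c ≠ j_{c+a}. -/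
theorem statement4 {A : Type} [AddCommGroup A] (j : A → A) (hj : ∀ a : A, j (-a) = j a) :
    (∀ a c : A × A, sigmaFun j a = sigmaFun j c → a = c) ↔
      ∀ a : A, a ≠ 0 → ∃ c : A, j c ≠ j (c + a) := by
  constructor
  · intro hirr a ha
    by_contra h
    push_neg at h
    apply ha
    have := hirr (a, 0) (0, 0) ?_
    · simpa using congrArg Prod.fst this
    · funext c
      simp only [sigmaFun, Prod.mk.injEq, sub_zero, add_zero, true_and]
      have := h (c.1 - a)
      rw [sub_add_cancel] at this
      rw [this]
  · intro h a c hac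
    have h2 : a.2 = c.2 := by
      have := congrArg Prod.fst (congrFun hac (0, 0))
      simpa [sigmaFun] using this
    have h1 : a.1 = c.1 := by
      by_contra hne
      obtain ⟨e, he⟩ := h (a.1 - c.1) (sub_ne_zero.mpr hne)
      apply he
      have := congrArg Prod.snd (congrFun hac (e + a.1 - a.2, 0))
      simp only [sigmaFun, zero_sub, neg_inj] at this
      rw [← h2] at this
      have l1 : e + a.1 - a.2 + a.2 - a.1 = e := by abel
      have l2 : e + a.1 - a.2 + a.2 - c.1 = e + (a.1 - c.1) := by abel
      rw [l1, l2] at this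
      exact this
    exact Prod.ext h1 h2
end

section
/- Let (X,r) be an infinite simple involutive non-degenerate set-theoretic solution of the Yang–Baxter equation. Then (X,r) is irretractable. -/
namespace S6

open Function

variable {X : Type} (r : X × X → X × X)

def Lf (a b : X) : X := (r (a, b)).1
def Rf (a b : X) : X := (r (a, b)).2

variable (h1 : ∀ x, Function.Bijective fun y => (r (x, y)).1)

noncomputable def Ep (a : X) : Equiv.Perm X :=
  Equiv.ofBijective (fun b => (r (a, b)).1) (h1 a)

noncomputable def Tp (a : X) : Equiv.Perm X := (Ep r h1 a).symm

lemma Ep_apply (a b : X) : Ep r h1 a b = Lf r a b := rfl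

lemma Tp_L (a b : X) : Tp r h1 a (Lf r a b) = b := (Ep r h1 a).symm_apply_apply b

lemma L_Tp (a b : X) : Lf r a (Tp r h1 a b) = b := (Ep r h1 a).apply_symm_apply b

lemma tp_congr {u v : X} (h : Ep r h1 u = Ep r h1 v) (w : X) :
    Tp r h1 u w = Tp r h1 v w := by unfold Tp; rw [h]

lemma ep_eq_of_tp_forall {u v : X} (h : ∀ w, Tp r h1 u w = Tp r h1 v w) :
    Ep r h1 u = Ep r h1 v := by
  have h' : Tp r h1 u = Tp r h1 v := Equiv.ext h
  have h2 := congrArg Equiv.symm h'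
  simpa [Tp] using h2

lemma Ep_congr {u v : X} (h : Ep r h1 u = Ep r h1 v) (b : X) :
    Lf r u b = Lf r v b := by rw [← Ep_apply r h1, ← Ep_apply r h1, h]

lemma inv1 (hinv : Involutive r) (a b : X) : Lf r (Lf r a b) (Rf r a b) = a :=
  congrArg Prod.fst (hinv (a, b))

lemma inv2 (hinv : Involutive r) (a b : X) : Rf r (Lf r a b) (Rf r a b) = b :=
  congrArg Prod.snd (hinv (a, b))

lemma Rf_eq (hinv : Involutive r) (a b : X) :
    Rf r a b = Tp r h1 (Lf r a b) a := by
  have h := inv1 r hinv a b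
  exact (Equiv.eq_symm_apply (Ep r h1 (Lf r a b))).2 h

lemma ybe1 (hybe : r12 r ∘ r23 r ∘ r12 r = r23 r ∘ r12 r ∘ r23 r) (a b c : X) :
    Lf r (Lf r a b) (Lf r (Rf r a b) c) = Lf r a (Lf r b c) :=
  congrArg (fun t : X × X × X => t.1) (congrFun hybe (a, b, c))

lemma star (hinv : Involutive r) (hybe : r12 r ∘ r23 r ∘ r12 r = r23 r ∘ r12 r ∘ r23 r)
    (x w z : X) :
    Lf r w (Lf r (Tp r h1 w x) z) = Lf r x (Lf r (Tp r h1 x w) z) := by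
  have h := ybe1 r hybe x (Tp r h1 x w) z
  rw [L_Tp r h1] at h
  rw [Rf_eq r h1 hinv x (Tp r h1 x w), L_Tp r h1] at h
  exact h

lemma Clem (hinv : Involutive r) (hybe : r12 r ∘ r23 r ∘ r12 r = r23 r ∘ r12 r ∘ r23 r)
    (x w z : X) :
    Tp r h1 (Tp r h1 x w) (Tp r h1 x z) = Tp r h1 (Tp r h1 w x) (Tp r h1 w z) := by
  set A := Tp r h1 (Tp r h1 x w) (Tp r h1 x z) with hA
  have hLA : Lf r (Tp r h1 x w) A = Tp r h1 x z := by rw [hA]; exact L_Tp r h1 _ _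
  have h2 := star r h1 hinv hybe x w A
  rw [hLA, L_Tp r h1] at h2
  have h3 : Lf r (Tp r h1 w x) A = Tp r h1 w z := by
    have h4 := congrArg (Tp r h1 w) h2
    rwa [Tp_L r h1] at h4
  have h5 := congrArg (Tp r h1 (Tp r h1 w x)) h3
  rwa [Tp_L r h1] at h5

lemma Dinj (hinv : Involutive r) (h2 : ∀ y, Bijective fun a => (r (a, y)).2)
    {a a' : X} (h : Tp r h1 a a = Tp r h1 a' a') : a = a' := by
  have hLa : Lf r a (Tp r h1 a a) = a := L_Tp r h1 _ _
  have hLa' : Lf r a' (Tp r h1 a a) = a' := by rw [h]; exact L_Tp r h1 _ _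
  have hra : Rf r a (Tp r h1 a a) = Tp r h1 a a := by
    have hi := inv1 r hinv a (Tp r h1 a a)
    rw [hLa] at hi
    exact (h1 a).injective
      (show Lf r a (Rf r a (Tp r h1 a a)) = Lf r a (Tp r h1 a a) by rw [hi, hLa])
  have hra' : Rf r a' (Tp r h1 a a) = Tp r h1 a a := by
    have hi := inv1 r hinv a' (Tp r h1 a a)
    rw [hLa'] at hi
    exact (h1 a').injective
      (show Lf r a' (Rf r a' (Tp r h1 a a)) = Lf r a' (Tp r h1 a a) by rw [hi, hLa'])
  exact (h2 (Tp r h1 a a)).injective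
    (show Rf r a (Tp r h1 a a) = Rf r a' (Tp r h1 a a) by rw [hra, hra'])

lemma Wlem (hinv : Involutive r) (hybe : r12 r ∘ r23 r ∘ r12 r = r23 r ∘ r12 r ∘ r23 r)
    {b b' : X} (hbb : Ep r h1 b = Ep r h1 b') (a : X) :
    Ep r h1 (Tp r h1 a b) = Ep r h1 (Tp r h1 a b') := by
  apply ep_eq_of_tp_forall
  intro w
  have hz : ∀ z, Tp r h1 (Tp r h1 a b) (Tp r h1 a z) =
      Tp r h1 (Tp r h1 a b') (Tp r h1 a z) := by
    intro z
    rw [Clem r h1 hinv hybe a b z, Clem r h1 hinv hybe a b' z]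
    rw [show Tp r h1 b = Tp r h1 b' from congrArg Equiv.symm hbb]
  have h := hz (Ep r h1 a w)
  rwa [show Tp r h1 a (Ep r h1 a w) = w from (Ep r h1 a).symm_apply_apply w] at h

lemma Ilem (hinv : Involutive r) (hybe : r12 r ∘ r23 r ∘ r12 r = r23 r ∘ r12 r ∘ r23 r)
    (h2 : ∀ y, Bijective fun a => (r (a, y)).2)
    {u u' : X} (a : X)
    (h : Ep r h1 (Tp r h1 a u) = Ep r h1 (Tp r h1 a u')) : Ep r h1 u = Ep r h1 u' := by
  have hδ : ∀ z, Tp r h1 (Tp r h1 u a) (Tp r h1 u z) =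
      Tp r h1 (Tp r h1 u' a) (Tp r h1 u' z) := by
    intro z
    rw [← Clem r h1 hinv hybe a u z, ← Clem r h1 hinv hybe a u' z]
    exact tp_congr r h1 h _
  have hc : Tp r h1 u a = Tp r h1 u' a := Dinj r h1 hinv h2 (hδ a)
  apply ep_eq_of_tp_forall
  intro z
  have h3 := hδ z
  rw [hc] at h3
  exact (Tp r h1 (Tp r h1 u' a)).injective h3

lemma WL (hinv : Involutive r) (hybe : r12 r ∘ r23 r ∘ r12 r = r23 r ∘ r12 r ∘ r23 r)
    (h2 : ∀ y, Bijective fun a => (r (a, y)).2)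
    {b b' : X} (h : Ep r h1 b = Ep r h1 b') (a : X) :
    Ep r h1 (Lf r a b) = Ep r h1 (Lf r a b') := by
  apply Ilem r h1 hinv hybe h2 a
  rwa [Tp_L r h1, Tp_L r h1]

lemma IL (hinv : Involutive r) (hybe : r12 r ∘ r23 r ∘ r12 r = r23 r ∘ r12 r ∘ r23 r)
    {b b' : X} (a : X) (h : Ep r h1 (Lf r a b) = Ep r h1 (Lf r a b')) :
    Ep r h1 b = Ep r h1 b' := by
  have h3 := Wlem r h1 hinv hybe h a
  rwa [Tp_L r h1, Tp_L r h1] at h3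

lemma Inj2 (hinv : Involutive r) (hybe : r12 r ∘ r23 r ∘ r12 r = r23 r ∘ r12 r ∘ r23 r)
    (h2 : ∀ y, Bijective fun a => (r (a, y)).2)
    {x x' y : X} (h : Ep r h1 (Rf r x y) = Ep r h1 (Rf r x' y)) :
    Ep r h1 x = Ep r h1 x' := by
  set u := Lf r x y with hu
  set u' := Lf r x' y with hu'
  rw [Rf_eq r h1 hinv x y, Rf_eq r h1 hinv x' y, ← hu, ← hu'] at h
  have hP : ∀ w, Tp r h1 (Tp r h1 u x) w = Tp r h1 (Tp r h1 u' x') w := tp_congr r h1 h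
  have hxu : Tp r h1 x u = y := by rw [hu]; exact Tp_L r h1 _ _
  have hxu' : Tp r h1 x' u' = y := by rw [hu']; exact Tp_L r h1 _ _
  have γ1 : ∀ z, Tp r h1 (Tp r h1 u x) (Tp r h1 u z) = Tp r h1 y (Tp r h1 x z) := by
    intro z
    have hcl := Clem r h1 hinv hybe u x z
    rwa [hxu] at hcl
  have γ2 : ∀ z, Tp r h1 (Tp r h1 u' x') (Tp r h1 u' z) = Tp r h1 y (Tp r h1 x' z) := by
    intro z
    have hcl := Clem r h1 hinv hybe u' x' z
    rwa [hxu'] at hcl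
  have e1 : Tp r h1 (Tp r h1 u x) (Tp r h1 u u) = Tp r h1 y y := by
    have h3 := γ1 u; rwa [hxu] at h3
  have e2 : Tp r h1 (Tp r h1 u x) (Tp r h1 u' u') = Tp r h1 y y := by
    have h3 := γ2 u'
    rw [hxu'] at h3
    rw [← hP] at h3
    exact h3
  have huu : Tp r h1 u u = Tp r h1 u' u' :=
    (Tp r h1 (Tp r h1 u x)).injective (e1.trans e2.symm)
  have hueq : u = u' := Dinj r h1 hinv h2 huu
  apply ep_eq_of_tp_forall
  intro z
  apply (Tp r h1 y).injective
  rw [← γ1 z, hP (Tp r h1 u z), hueq, γ2 z]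

end S6

namespace S6

open Function

variable {X : Type} (r : X × X → X × X)
variable (h1 : ∀ x, Function.Bijective fun y => (r (x, y)).1)

def st : Setoid X :=
  ⟨fun a b => Ep r h1 a = Ep r h1 b, ⟨fun _ => rfl, Eq.symm, Eq.trans⟩⟩

lemma resp (hinv : Involutive r) (hybe : r12 r ∘ r23 r ∘ r12 r = r23 r ∘ r12 r ∘ r23 r)
    (h2 : ∀ y, Bijective fun a => (r (a, y)).2) : ∀ (a b a' b' : X), (st r h1).r a a' → (st r h1).r b b' →
    ((Quotient.mk (st r h1) (Lf r a b), Quotient.mk (st r h1) (Rf r a b)) :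
      Quotient (st r h1) × Quotient (st r h1)) =
    (Quotient.mk (st r h1) (Lf r a' b'), Quotient.mk (st r h1) (Rf r a' b')) := by
  intro a b a' b' ha hb
  have ha' : Ep r h1 a = Ep r h1 a' := ha
  have hb' : Ep r h1 b = Ep r h1 b' := hb
  have comp1 : Ep r h1 (Lf r a b) = Ep r h1 (Lf r a' b') := by
    have s1 : Ep r h1 (Lf r a b) = Ep r h1 (Lf r a b') := WL r h1 hinv hybe h2 hb' a
    have s2 : Lf r a b' = Lf r a' b' := Ep_congr r h1 ha' b'
    rw [s1, s2]
  have comp2 : Ep r h1 (Rf r a b) = Ep r h1 (Rf r a' b') := by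
    rw [Rf_eq r h1 hinv a b, Rf_eq r h1 hinv a' b']
    have s1 : Ep r h1 (Lf r a b) = Ep r h1 (Lf r a' b') := comp1
    have s2 : Tp r h1 (Lf r a' b') a' = Tp r h1 (Lf r a b) a' := tp_congr r h1 s1.symm a'
    rw [s2]
    exact Wlem r h1 hinv hybe ha' (Lf r a b)
  exact Prod.ext (Quotient.sound comp1) (Quotient.sound comp2)

def sQ (hinv : Involutive r) (hybe : r12 r ∘ r23 r ∘ r12 r = r23 r ∘ r12 r ∘ r23 r)
    (h2 : ∀ y, Bijective fun a => (r (a, y)).2) : Quotient (st r h1) × Quotient (st r h1) → Quotient (st r h1) × Quotient (st r h1) :=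
  fun p => Quotient.lift₂
    (fun a b => ((Quotient.mk (st r h1) (Lf r a b)), (Quotient.mk (st r h1) (Rf r a b))))
    (resp r h1 hinv hybe h2) p.1 p.2

lemma sQ_mk (hinv : Involutive r) (hybe : r12 r ∘ r23 r ∘ r12 r = r23 r ∘ r12 r ∘ r23 r)
    (h2 : ∀ y, Bijective fun a => (r (a, y)).2) (a b : X) :
    sQ r h1 hinv hybe h2 (Quotient.mk (st r h1) a, Quotient.mk (st r h1) b) =
      (Quotient.mk (st r h1) (Lf r a b), Quotient.mk (st r h1) (Rf r a b)) := rfl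

lemma sQ_sol (hinv : Involutive r) (hybe : r12 r ∘ r23 r ∘ r12 r = r23 r ∘ r12 r ∘ r23 r)
    (h2 : ∀ y, Bijective fun a => (r (a, y)).2) : IsSolution (sQ r h1 hinv hybe h2) := by
  refine ⟨?_, ?_, ?_, ?_⟩
  · rintro ⟨a, b⟩
    obtain ⟨a, rfl⟩ := Quotient.exists_rep a
    obtain ⟨b, rfl⟩ := Quotient.exists_rep b
    rw [sQ_mk r h1 hinv hybe h2, sQ_mk r h1 hinv hybe h2, inv1 r hinv, inv2 r hinv]
  · intro a
    obtain ⟨a, rfl⟩ := Quotient.exists_rep a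
    constructor
    · intro b b'
      obtain ⟨b, rfl⟩ := Quotient.exists_rep b
      obtain ⟨b', rfl⟩ := Quotient.exists_rep b'
      intro h
      have h' : Ep r h1 (Lf r a b) = Ep r h1 (Lf r a b') := Quotient.exact h
      exact Quotient.sound (IL r h1 hinv hybe a h')
    · intro c
      obtain ⟨c, rfl⟩ := Quotient.exists_rep c
      refine ⟨Quotient.mk (st r h1) (Tp r h1 a c), ?_⟩
      show Quotient.mk (st r h1) (Lf r a (Tp r h1 a c)) = _
      rw [L_Tp r h1]
  · intro b
    obtain ⟨b, rfl⟩ := Quotient.exists_rep b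
    constructor
    · intro a a'
      obtain ⟨a, rfl⟩ := Quotient.exists_rep a
      obtain ⟨a', rfl⟩ := Quotient.exists_rep a'
      intro h
      have h' : Ep r h1 (Rf r a b) = Ep r h1 (Rf r a' b) := Quotient.exact h
      exact Quotient.sound (Inj2 r h1 hinv hybe h2 h')
    · intro c
      obtain ⟨c, rfl⟩ := Quotient.exists_rep c
      obtain ⟨a, ha⟩ := (h2 b).surjective c
      refine ⟨Quotient.mk (st r h1) a, ?_⟩
      show Quotient.mk (st r h1) (Rf r a b) = _
      rw [show Rf r a b = c from ha]
  · funext t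
    obtain ⟨a, b, c⟩ := t
    obtain ⟨x1, rfl⟩ := Quotient.exists_rep a
    obtain ⟨x2, rfl⟩ := Quotient.exists_rep b
    obtain ⟨x3, rfl⟩ := Quotient.exists_rep c
    set f3 : X × X × X → Quotient (st r h1) × Quotient (st r h1) × Quotient (st r h1) :=
      fun u => (Quotient.mk (st r h1) u.1, Quotient.mk (st r h1) u.2.1,
        Quotient.mk (st r h1) u.2.2) with hf3
    have c12 : ∀ u : X × X × X, r12 (sQ r h1 hinv hybe h2) (f3 u) = f3 (r12 r u) :=
      fun u => rfl
    have c23 : ∀ u : X × X × X, r23 (sQ r h1 hinv hybe h2) (f3 u) = f3 (r23 r u) :=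
      fun u => rfl
    show (r12 (sQ r h1 hinv hybe h2) ∘ r23 (sQ r h1 hinv hybe h2) ∘ r12 (sQ r h1 hinv hybe h2))
        (f3 (x1, x2, x3)) =
      (r23 (sQ r h1 hinv hybe h2) ∘ r12 (sQ r h1 hinv hybe h2) ∘ r23 (sQ r h1 hinv hybe h2))
        (f3 (x1, x2, x3))
    show r12 (sQ r h1 hinv hybe h2) (r23 (sQ r h1 hinv hybe h2)
        (r12 (sQ r h1 hinv hybe h2) (f3 (x1, x2, x3)))) = _
    rw [c12, c23, c12]
    show _ = r23 (sQ r h1 hinv hybe h2) (r12 (sQ r h1 hinv hybe h2)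
        (r23 (sQ r h1 hinv hybe h2) (f3 (x1, x2, x3))))
    rw [c23, c12, c23]
    exact congrArg f3 (congrFun hybe (x1, x2, x3))

end S6

namespace S6

open Function

lemma trivBoolSol : IsSolution (fun p : Bool × Bool => (p.2, p.1)) := by
  refine ⟨fun p => rfl, fun x => Function.bijective_id, fun y => Function.bijective_id, rfl⟩

lemma shiftZSol : IsSolution (fun p : ZMod 2 × ZMod 2 => (p.2 + 1, p.1 - 1)) := by
  refine ⟨?_, ?_, ?_, ?_⟩
  · intro p
    exact (by decide : ∀ q : ZMod 2 × ZMod 2,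
      ((fun p : ZMod 2 × ZMod 2 => (p.2 + 1, p.1 - 1))
        ((fun p : ZMod 2 × ZMod 2 => (p.2 + 1, p.1 - 1)) q)) = q) p
  · intro x
    exact ⟨fun a b h => by simpa using h, fun b => ⟨b - 1, by simp⟩⟩
  · intro y
    exact ⟨fun a b h => by simpa using h, fun b => ⟨b + 1, by simp⟩⟩
  have h : ∀ t : ZMod 2 × ZMod 2 × ZMod 2,
      (r12 (fun p : ZMod 2 × ZMod 2 => (p.2 + 1, p.1 - 1)) ∘
        r23 (fun p : ZMod 2 × ZMod 2 => (p.2 + 1, p.1 - 1)) ∘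
        r12 (fun p : ZMod 2 × ZMod 2 => (p.2 + 1, p.1 - 1))) t =
      (r23 (fun p : ZMod 2 × ZMod 2 => (p.2 + 1, p.1 - 1)) ∘
        r12 (fun p : ZMod 2 × ZMod 2 => (p.2 + 1, p.1 - 1)) ∘
        r23 (fun p : ZMod 2 × ZMod 2 => (p.2 + 1, p.1 - 1))) t := by decide
  funext t
  exact h t

lemma finite_of_period {X : Type} (e : Equiv.Perm X) (p : X)
    (hall : ∀ z, ∃ n : ℤ, (e ^ n) p = z) (K : ℤ) (hK : 0 < K)
    (hfix : (e ^ K) p = p) : Finite X := by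
  have hmul : ∀ q : ℤ, (e ^ (K * q)) p = p := by
    intro q
    induction q using Int.induction_on with
    | zero => simp
    | succ i ih =>
      rw [show K * ((i : ℤ) + 1) = K * (i : ℤ) + K by ring, zpow_add,
        Equiv.Perm.mul_apply, hfix, ih]
    | pred i ih =>
      have hKinv : (e ^ K)⁻¹ p = p := by
        conv_lhs => rw [← hfix]
        simp
      rw [show K * (-(i : ℤ) - 1) = K * (-(i : ℤ)) + (-K) by ring, zpow_add,
        Equiv.Perm.mul_apply, zpow_neg, hKinv, ih]
  have hsurj : Function.Surjective (fun i : Fin K.toNat => (e ^ ((i : ℕ) : ℤ)) p) := by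
    intro z
    obtain ⟨n, hn⟩ := hall z
    have h0 : 0 ≤ n % K := Int.emod_nonneg n (ne_of_gt hK)
    have hlt : n % K < K := Int.emod_lt_of_pos n hK
    refine ⟨⟨(n % K).toNat, by omega⟩, ?_⟩
    show (e ^ (((n % K).toNat : ℕ) : ℤ)) p = z
    rw [Int.toNat_of_nonneg h0]
    have hrepr : (e ^ n) p = (e ^ (n % K)) p := by
      conv_lhs => rw [show n = n % K + K * (n / K) by rw [add_comm]; exact (Int.mul_ediv_add_emod n K).symm]
      rw [zpow_add, Equiv.Perm.mul_apply, hmul]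
    rw [← hn, hrepr]
  exact Finite.of_surjective _ hsurj

end S6

/-- an infinite simple solution of the YBE is irretractable. -/
theorem statement6 {X : Type} [Infinite X] (r : X × X → X × X)
    (hsol : IsSolution r) (hsimple : IsSimpleSol r) :
    ∀ x y : X, (∀ z : X, (r (x, z)).1 = (r (y, z)).1) → x = y := by
  obtain ⟨hinv, h1, h2, hybe⟩ := hsol
  intro x y hxy
  rcases hsimple.2 (Quotient (S6.st r h1)) (S6.sQ r h1 hinv hybe h2)
      (S6.sQ_sol r h1 hinv hybe h2) (Quotient.mk (S6.st r h1))
      (fun a b => rfl) (fun q => Quotient.exists_rep q) with hbij | hsub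
  · apply hbij.injective
    apply Quotient.sound
    show S6.Ep r h1 x = S6.Ep r h1 y
    exact Equiv.ext fun z => hxy z
  · exfalso
    have hconst : ∀ a b : X, S6.Ep r h1 a = S6.Ep r h1 b := by
      intro a b
      exact Quotient.exact
        (@Subsingleton.elim _ hsub (Quotient.mk (S6.st r h1) a) (Quotient.mk (S6.st r h1) b))
    have hp : Nonempty X := inferInstance
    set p := Classical.arbitrary X with hp'
    set e := S6.Ep r h1 p with he
    have hL : ∀ a b : X, (r (a, b)).1 = e b := by
      intro a b
      exact S6.Ep_congr r h1 (hconst a p) b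
    by_cases horb : ∀ z, ∃ n : ℤ, (e ^ n) p = z
    · -- single infinite orbit: map onto ZMod 2 with the shift solution
      have huniq : ∀ n m : ℤ, (e ^ n) p = (e ^ m) p → n = m := by
        intro n m hnm
        by_contra hne
        have key : ∀ k l : ℤ, (e ^ k) p = (e ^ l) p → (e ^ (k - l)) p = p := by
          intro k l hkl
          rw [show k - l = -l + k by ring, zpow_add, Equiv.Perm.mul_apply, hkl,
            ← Equiv.Perm.mul_apply, ← zpow_add, show -l + l = 0 by ring, zpow_zero,
            Equiv.Perm.one_apply]
        have hfin : Finite X := by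
          rcases lt_or_gt_of_ne (sub_ne_zero.2 hne) with hlt | hgt
          · exact S6.finite_of_period e p horb (m - n) (by omega) (key m n hnm.symm)
          · exact S6.finite_of_period e p horb (n - m) hgt (key n m hnm)
        exact not_finite X
      set F : X → ZMod 2 := fun z => ((Classical.choose (horb z) : ℤ) : ZMod 2) with hF'
      have hF : ∀ (z : X) (n : ℤ), (e ^ n) p = z → F z = ((n : ℤ) : ZMod 2) := by
        intro z n hn
        have hs := Classical.choose_spec (horb z)
        have hun := huniq _ n (hs.trans hn.symm)
        simp only [hF']
        rw [hun]
      have hFe : ∀ b, F (e b) = F b + 1 := by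
        intro b
        obtain ⟨n, hn⟩ := horb b
        have h1' : (e ^ (n + 1)) p = e b := by
          rw [show n + 1 = 1 + n by ring, zpow_add, Equiv.Perm.mul_apply, hn, zpow_one]
        rw [hF _ _ h1', hF _ _ hn]
        push_cast
        ring
      have hhom : IsSolHom r (fun pr : ZMod 2 × ZMod 2 => (pr.2 + 1, pr.1 - 1)) F := by
        intro a b
        show F ((r (a, b)).1) = F b + 1
        rw [hL a b, hFe]
      have hsurjF : Function.Surjective F := by
        have hp0 : F p = 0 := by
          have h3 := hF p 0 (by simp)
          simpa using h3
        have hp1 : F (e p) = 1 := by rw [hFe, hp0, zero_add]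
        intro c
        have hc : c = 0 ∨ c = 1 := by revert c; decide
        rcases hc with rfl | rfl
        · exact ⟨p, hp0⟩
        · exact ⟨e p, hp1⟩
      rcases hsimple.2 (ZMod 2) _ S6.shiftZSol F hhom hsurjF with hbij | hsub2
      · haveI : Finite X := Finite.of_injective F hbij.injective
        exact not_finite X
      · haveI := hsub2
        exact absurd (Subsingleton.elim (0 : ZMod 2) 1) (by decide)
    · -- at least two orbits: map onto Bool with the trivial solution
      push_neg at horb
      obtain ⟨q0, hq0⟩ := horb
      classical
      set F : X → Bool := fun z => if ∃ n : ℤ, (e ^ n) p = z then true else false with hF'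
      have hFdef : ∀ z, F z = true ↔ ∃ n : ℤ, (e ^ n) p = z := by
        intro z
        simp only [hF']
        split
        · simp_all
        · simp_all
      have hiff : ∀ b, ((∃ n : ℤ, (e ^ n) p = e b) ↔ (∃ n : ℤ, (e ^ n) p = b)) := by
        intro b
        constructor
        · rintro ⟨n, hn⟩
          refine ⟨n - 1, ?_⟩
          apply e.injective
          rw [← hn, ← Equiv.Perm.mul_apply, ← zpow_one_add, show 1 + (n - 1) = n by ring]
        · rintro ⟨n, hn⟩
          exact ⟨n + 1, by rw [show n + 1 = 1 + n by ring, zpow_add, Equiv.Perm.mul_apply,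
            hn, zpow_one]⟩
      have hFe : ∀ b, F (e b) = F b := by
        intro b
        have h3 := ((hFdef (e b)).trans ((hiff b).trans (hFdef b).symm))
        cases hb : F b
        · cases hb2 : F (e b)
          · rfl
          · exact absurd (h3.1 hb2) (by rw [hb]; simp)
        · exact h3.2 hb
      have hhom : IsSolHom r (fun pr : Bool × Bool => (pr.2, pr.1)) F := by
        intro a b
        show F ((r (a, b)).1) = F b
        rw [hL a b, hFe]
      have hsurjF : Function.Surjective F := by
        intro c
        cases c
        · refine ⟨q0, ?_⟩
          cases hq : F q0
          · rfl
          · exact absurd ((hFdef q0).1 hq) (by push_neg; exact hq0)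
        · exact ⟨p, (hFdef p).2 ⟨0, by simp⟩⟩
      rcases hsimple.2 Bool _ S6.trivBoolSol F hhom hsurjF with hbij | hsub2
      · haveI : Finite X := Finite.of_injective F hbij.injective
        exact not_finite X
      · haveI := hsub2
        exact absurd (Subsingleton.elim true false) (by decide)
end

section
/- Suppose A is a nonzero abelian group and the solution (A², r) is simple. Then for every nonzero a ∈ A, the subgroup V_a equals A, where V_a is the union of the increasing chain V_{a,1} ⊆ V_{a,2} ⊆ ⋯ defined by V_{a,1} = ⟨ j_c - j_{c+a} : c ∈ A ⟩ and V_{a,i} = V_{a,i-1} + ⟨ j_c - j_{c+v} : c ∈ A, v ∈ V_{a,i-1} ⟩ for i > 1. -/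
section Gen

variable {B C : Type} [AddCommGroup B] [AddCommGroup C]

/-- A generalized version of `rj`, where the two coordinates live in possibly different
abelian groups `B` and `C`, connected by a homomorphism `φ : C →+ B` and an even map
`k : B → C`.  For `B = C = A`, `φ = id`, `k = j` this recovers `rj j`. -/
def rGen (φ : C →+ B) (k : B → C) : (B × C) × (B × C) → (B × C) × (B × C) :=
  fun p =>
    ((p.2.1 + φ p.1.2, p.2.2 - k (p.2.1 + φ p.1.2 - p.1.1)),
     (p.1.1 - φ p.2.2 + φ (k (p.2.1 + φ p.1.2 - p.1.1)),
      p.1.2 + k (p.2.1 + φ p.1.2 - p.1.1)))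

lemma rGen_isSolution (φ : C →+ B) (k : B → C) (hk : ∀ b, k (-b) = k b) :
    IsSolution (rGen φ k) := by
  refine ⟨?_, ?_, ?_, ?_⟩
  · rintro ⟨⟨x1, x2⟩, y1, y2⟩
    simp only [rGen, map_sub, map_add]
    set e := k (y1 + φ x2 - x1) with he
    clear_value e
    rw [show x1 - φ y2 + φ e + (φ y2 - φ e) - (y1 + φ x2) = -(y1 + φ x2 - x1) by abel,
        hk, ← he]
    refine Prod.ext (Prod.ext ?_ ?_) (Prod.ext ?_ ?_) <;> dsimp only <;> abel
  · rintro ⟨x1, x2⟩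
    refine Function.bijective_iff_has_inverse.mpr
      ⟨fun v => (v.1 - φ x2, v.2 + k (v.1 - x1)), ?_, ?_⟩
    · rintro ⟨y1, y2⟩
      simp only [rGen]
      set e := k (y1 + φ x2 - x1) with he
      clear_value e
      refine Prod.ext ?_ ?_ <;> dsimp only <;> abel
    · rintro ⟨v1, v2⟩
      simp only [rGen]
      rw [show v1 - φ x2 + φ x2 - x1 = v1 - x1 by abel]
      refine Prod.ext ?_ ?_ <;> dsimp only <;> abel
  · rintro ⟨y1, y2⟩
    refine Function.bijective_iff_has_inverse.mpr
      ⟨fun v => (v.1 + φ y2 - φ (k (v.1 - φ v.2 + φ y2 - y1)),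
                 v.2 - k (v.1 - φ v.2 + φ y2 - y1)), ?_, ?_⟩
    · rintro ⟨x1, x2⟩
      simp only [rGen, map_add, map_sub]
      set e := k (y1 + φ x2 - x1) with he
      clear_value e
      rw [show x1 - φ y2 + φ e - (φ x2 + φ e) + φ y2 - y1 = -(y1 + φ x2 - x1) by abel,
          hk, ← he]
      refine Prod.ext ?_ ?_ <;> dsimp only <;> abel
    · rintro ⟨v1, v2⟩
      simp only [rGen, map_add, map_sub]
      set w := k (v1 - φ v2 + φ y2 - y1) with hw
      clear_value w
      rw [show y1 + (φ v2 - φ w) - (v1 + φ y2 - φ w) = -(v1 - φ v2 + φ y2 - y1) by abel,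
          hk, ← hw]
      refine Prod.ext ?_ ?_ <;> dsimp only <;> abel
  · funext t
    obtain ⟨⟨x1, x2⟩, ⟨y1, y2⟩, z1, z2⟩ := t
    simp only [r12, r23, Function.comp_apply, rGen, map_add, map_sub]
    set e := k (y1 + φ x2 - x1) with he
    clear_value e
    rw [show z1 + (φ x2 + φ e) - (x1 - φ y2 + φ e) = z1 + φ y2 + φ x2 - x1 by abel]
    rw [show z1 + (φ x2 + φ e) + (φ y2 - φ e) - (y1 + φ x2) = z1 + φ y2 - y1 by abel]
    set g := k (z1 + φ y2 + φ x2 - x1) with hg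
    clear_value g
    set h := k (z1 + φ y2 - y1) with hh
    clear_value h
    rw [show y1 - φ z2 + φ h + (φ x2 + φ g) - (x1 - (φ z2 - φ h) + φ g) =
        y1 + φ x2 - x1 by abel, ← he]
    simp only [Prod.mk.injEq]
    refine ⟨⟨?_, ?_⟩, ⟨?_, ?_⟩, ?_, ?_⟩ <;> abel

end Gen

/-- if A ≠ {0} and (A², r) is simple, then V_a = A for every nonzero a. -/
theorem statement8 {A : Type} [AddCommGroup A] [Nontrivial A] (j : A → A)
    (hj : ∀ a : A, j (-a) = j a) (hsimple : IsSimpleSol (rj j)) :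
    ∀ a : A, a ≠ 0 → (⨆ n : ℕ, Vchain j a n) = ⊤ := by
  classical
  obtain ⟨-, hs⟩ := hsimple
  intro a ha
  set V := ⨆ n, Vchain j a n with hV
  have hmono : Monotone (Vchain j a) := monotone_nat_of_le_succ (fun n => le_sup_left)
  have hmemV : ∀ x : A, x ∈ V ↔ ∃ n, x ∈ Vchain j a n := fun x =>
    AddSubgroup.mem_iSup_of_directed hmono.directed_le
  have hK1 : ∀ c, j c - j (c + a) ∈ V :=
    fun c => le_iSup (Vchain j a) 0 (AddSubgroup.subset_closure ⟨c, rfl⟩)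
  have hK2 : ∀ c v, v ∈ V → j c - j (c + v) ∈ V := by
    intro c v hv
    obtain ⟨n, hn⟩ := (hmemV v).mp hv
    refine le_iSup (Vchain j a) (n + 1) (show _ ∈ Vchain j a (n + 1) from ?_)
    exact (le_sup_right : _ ≤ Vchain j a n ⊔ _)
      (AddSubgroup.subset_closure ⟨c, v, hn, rfl⟩)
  -- the quotient solution on (A ⧸ V)²
  let Q := A ⧸ V
  let π : A →+ Q := QuotientAddGroup.mk' V
  let jb : Q → Q := fun q => Quotient.liftOn' q (fun c => π (j c)) (by
    intro c c' h
    have h' := QuotientAddGroup.leftRel_apply.mp h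
    have h2 := hK2 c (-c + c') h'
    rw [add_neg_cancel_left] at h2
    exact QuotientAddGroup.eq_iff_sub_mem.mpr h2)
  have hjb : ∀ c : A, jb (π c) = π (j c) := fun c => rfl
  have hjbeven : ∀ q : Q, jb (-q) = jb q := by
    intro q
    induction q using QuotientAddGroup.induction_on with
    | H c =>
      show π (j (-c)) = π (j c)
      rw [hj]
  let f1 : A × A → Q × Q := fun p => (π p.1, π p.2)
  have hhom1 : IsSolHom (rj j) (rGen (AddMonoidHom.id Q) jb) f1 := by
    intro x y
    show (π (y.1 + x.2), π (y.2 - j (y.1 + x.2 - x.1))) =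
      (π y.1 + (AddMonoidHom.id Q) (π x.2), π y.2 - jb (π y.1 + π x.2 - π x.1))
    rw [show π y.1 + π x.2 - π x.1 = π (y.1 + x.2 - x.1) by rw [map_sub, map_add], hjb,
      map_sub, map_add]
    rfl
  have hsurj1 : Function.Surjective f1 := by
    rintro ⟨q1, q2⟩
    obtain ⟨c1, rfl⟩ := QuotientAddGroup.mk'_surjective V q1
    obtain ⟨c2, rfl⟩ := QuotientAddGroup.mk'_surjective V q2
    exact ⟨(c1, c2), rfl⟩
  rcases hs (Q × Q) _ (rGen_isSolution (AddMonoidHom.id Q) jb hjbeven) f1 hhom1 hsurj1 with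
    hbij | hsub
  · -- f1 bijective : V = ⊥, so j is a-periodic; derive a contradiction
    exfalso
    have hπinj : Function.Injective π := by
      intro u v huv
      have : ((u, u) : A × A) = (v, v) := hbij.1 (by show (π u, π u) = (π v, π v); rw [huv])
      exact congrArg Prod.fst this
    have hper : ∀ c, j (c + a) = j c := by
      intro c
      have h0 : π (j c - j (c + a)) = π 0 := by
        rw [map_zero]
        exact (QuotientAddGroup.eq_zero_iff _).mpr (hK1 c)
      have := hπinj h0
      rw [sub_eq_zero] at this
      exact this.symm
    have hZ : ∀ (n : ℤ) (c : A), j (c + n • a) = j c := by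
      intro n
      induction n using Int.induction_on with
      | zero => intro c; simp
      | succ m ih =>
        intro c
        rw [show c + ((m : ℤ) + 1) • a = c + a + (m : ℤ) • a by rw [add_smul, one_smul]; abel,
          ih, hper]
      | pred m ih =>
        intro c
        rw [show c + (-(m : ℤ) - 1) • a = c - a + (-(m : ℤ)) • a by
            rw [sub_smul, one_smul, neg_smul]; abel, ih, ← hper (c - a), sub_add_cancel]
    let W := AddSubgroup.zmultiples a
    let π2 : A →+ A ⧸ W := QuotientAddGroup.mk' W
    let jb2 : A ⧸ W → A := fun q => Quotient.liftOn' q j (by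
      intro c c' h
      have h' := QuotientAddGroup.leftRel_apply.mp h
      obtain ⟨n, hn⟩ := AddSubgroup.mem_zmultiples_iff.mp h'
      have : c' = c + n • a := by rw [hn]; abel
      rw [this, hZ])
    have hjb2 : ∀ c : A, jb2 (π2 c) = j c := fun c => rfl
    have hjb2even : ∀ q : A ⧸ W, jb2 (-q) = jb2 q := by
      intro q
      induction q using QuotientAddGroup.induction_on with
      | H c =>
        show j (-c) = j c
        rw [hj]
    let f2 : A × A → (A ⧸ W) × A := fun p => (π2 p.1, p.2)
    have hhom2 : IsSolHom (rj j) (rGen π2 jb2) f2 := by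
      intro x y
      show (π2 (y.1 + x.2), y.2 - j (y.1 + x.2 - x.1)) =
        (π2 y.1 + π2 x.2, y.2 - jb2 (π2 y.1 + π2 x.2 - π2 x.1))
      rw [show π2 y.1 + π2 x.2 - π2 x.1 = π2 (y.1 + x.2 - x.1) by rw [map_sub, map_add], hjb2,
        map_add]
    have hsurj2 : Function.Surjective f2 := by
      rintro ⟨q1, c2⟩
      obtain ⟨c1, rfl⟩ := QuotientAddGroup.mk'_surjective W q1
      exact ⟨(c1, c2), rfl⟩
    rcases hs ((A ⧸ W) × A) _ (rGen_isSolution π2 jb2 hjb2even) f2 hhom2 hsurj2 with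
      hbij2 | hsub2
    · have : ((a, 0) : A × A) = (0, 0) := by
        apply hbij2.1
        show (π2 a, (0 : A)) = (π2 0, (0 : A))
        have h0 : π2 a = 0 := (QuotientAddGroup.eq_zero_iff a).mpr (AddSubgroup.mem_zmultiples a)
        rw [map_zero, h0]
      exact ha (congrArg Prod.fst this)
    · obtain ⟨u, v, huv⟩ := exists_pair_ne A
      exact huv (congrArg Prod.snd (Subsingleton.elim ((0 : A ⧸ W), u) (0, v)))
  · -- the target is a singleton : V = ⊤
    have hQ : Subsingleton Q :=
      ⟨fun q1 q2 => congrArg Prod.fst (Subsingleton.elim ((q1, q1) : Q × Q) (q2, q2))⟩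
    rw [hV] at *
    exact (AddSubgroup.eq_top_iff' _).mpr fun x =>
      (QuotientAddGroup.eq_zero_iff x).mp (Subsingleton.elim _ _)
end

section
/- Suppose A is a finite non-trivial abelian group and for every nonzero a ∈ A the subgroup V_a (defined as the union of V_{a,1} = ⟨ j_c - j_{c+a} : c ∈ A ⟩ and inductively V_{a,i} = V_{a,i-1} + ⟨ j_c - j_{c+v} : c ∈ A, v ∈ V_{a,i-1} ⟩) equals A. Then the solution (A², r) is simple. -/
lemma vchain_bot {A : Type} [AddCommGroup A] (j : A → A) (a : A)
    (h : ∀ c, j (c + a) = j c) : ∀ n, Vchain j a n = ⊥ := by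
  intro n
  induction n with
  | zero =>
    rw [eq_bot_iff, Vchain]
    apply (AddSubgroup.closure_le _).2
    rintro x ⟨c, rfl⟩
    simp [h c]
  | succ n ih =>
    rw [eq_bot_iff, Vchain]
    apply sup_le (le_of_eq ih)
    apply (AddSubgroup.closure_le _).2
    rintro x ⟨c, v, hv, rfl⟩
    rw [ih] at hv
    rw [AddSubgroup.mem_bot] at hv
    subst hv
    simp

lemma jne {A : Type} [AddCommGroup A] [Nontrivial A] (j : A → A)
    (hV : ∀ a : A, a ≠ 0 → (⨆ n : ℕ, Vchain j a n) = ⊤) {a : A} (ha : a ≠ 0) :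
    ∃ c, j (c + a) ≠ j c := by
  by_contra h
  push_neg at h
  have h2 := hV a ha
  have h3 : (⨆ n : ℕ, Vchain j a n) = ⊥ := by
    simp [vchain_bot j a h]
  rw [h3] at h2
  obtain ⟨x, hx⟩ := exists_ne (0 : A)
  have : x ∈ (⊥ : AddSubgroup A) := h2 ▸ AddSubgroup.mem_top x
  exact hx (AddSubgroup.mem_bot.1 this)

lemma lemL {A Y : Type} [AddCommGroup A] (j : A → A) (s : Y × Y → Y × Y)
    (hs : ∀ z, Function.Injective fun y => (s (z, y)).1)
    (f : A × A → Y) (hf : IsSolHom (rj j) s f)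
    {p q : A × A} (hpq : f p = f q) (y : A × A) :
    f y = f (y.1 - (q.2 - p.2), y.2 + j (y.1 + p.2 - q.1) - j (y.1 + p.2 - p.1)) := by
  have hσ : sigmaFun j p y =
      sigmaFun j q (y.1 - (q.2 - p.2), y.2 + j (y.1 + p.2 - q.1) - j (y.1 + p.2 - p.1)) := by
    simp only [sigmaFun]
    have e1 : y.1 - (q.2 - p.2) + q.2 - q.1 = y.1 + p.2 - q.1 := by abel
    have e0 : y.1 - (q.2 - p.2) + q.2 = y.1 + p.2 := by abel
    rw [e1, e0, Prod.mk.injEq]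
    exact ⟨rfl, by abel⟩
  have h1 := hf p y
  have h2 := hf q (y.1 - (q.2 - p.2), y.2 + j (y.1 + p.2 - q.1) - j (y.1 + p.2 - p.1))
  simp only [rj] at h1 h2
  rw [hσ, h2, hpq] at h1
  exact hs (f q) h1.symm

lemma lemConj {A Y : Type} [AddCommGroup A] (j : A → A) (s : Y × Y → Y × Y)
    (f : A × A → Y) (hf : IsSolHom (rj j) s f)
    {p q : A × A} (hpq : f p = f q) :
    f (p.1, p.2 - j 0) = f (q.1, q.2 - j (0 + (q.1 - p.1))) := by
  have h1 := hf (p.1 - 0, 0) p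
  have h2 := hf (p.1 - 0, 0) q
  simp only [rj, sigmaFun] at h1 h2
  rw [hpq] at h1
  have h3 := h1.trans h2.symm
  have e1 : p.1 + 0 - (p.1 - 0) = (0 : A) := by abel
  have e2 : q.1 + 0 - (p.1 - 0) = 0 + (q.1 - p.1) := by abel
  rw [e1, e2, add_zero, add_zero] at h3
  exact h3

lemma lemKL {A Y : Type} [AddCommGroup A] (j : A → A) (s : Y × Y → Y × Y)
    (hs : ∀ z, Function.Injective fun y => (s (z, y)).1)
    (f : A × A → Y) (hf : IsSolHom (rj j) s f)
    {p q : A × A} (hpq : f p = f q) (c c' : A) (z : A × A) :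
    f z = f (z.1 + (j c - j (c - (q.1 - p.1))), z.2 + (j (c' + (q.2 - p.2)) - j c')) := by
  have h1 := lemL j s hs f hf hpq (c + p.1 - p.2, c' - z.1 + (c + p.1 - p.2))
  dsimp only at h1
  have a1 : c + p.1 - p.2 + p.2 - q.1 = c - (q.1 - p.1) := by abel
  have a2 : c + p.1 - p.2 + p.2 - p.1 = c := by abel
  rw [a1, a2] at h1
  have h2 := lemL j s hs f hf h1 z
  dsimp only at h2
  have b1 : z.1 + (c' - z.1 + (c + p.1 - p.2)) - (c + p.1 - p.2 - (q.2 - p.2))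
      = c' + (q.2 - p.2) := by abel
  have b2 : z.1 + (c' - z.1 + (c + p.1 - p.2)) - (c + p.1 - p.2) = c' := by abel
  rw [b1, b2] at h2
  refine h2.trans ?_
  congr 1
  rw [Prod.mk.injEq]
  exact ⟨by abel, by abel⟩

lemma lemWin {A Y : Type} [AddCommGroup A] (j : A → A)
    (hV : ∀ a : A, a ≠ 0 → (⨆ n : ℕ, Vchain j a n) = ⊤)
    (s : Y × Y → Y × Y)
    (hs : ∀ z, Function.Injective fun y => (s (z, y)).1)
    (f : A × A → Y) (hf : IsSolHom (rj j) s f)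
    (hwin : ∃ x, x ≠ 0 ∧ ∃ p : A × A, f p = f (p.1, p.2 + x)) (z z' : A × A) :
    f z = f z' := by
  obtain ⟨x, hx, hp⟩ := hwin
  set K2 : AddSubgroup A :=
    { carrier := {b | ∀ y : A × A, f y = f (y.1, y.2 + b)}
      zero_mem' := by intro y; simp
      add_mem' := by
        intro a b ha hb y
        rw [ha y, hb (y.1, y.2 + a)]
        dsimp only
        rw [add_assoc]
      neg_mem' := by
        intro a ha y
        have h := ha (y.1, y.2 + -a)
        dsimp only at h
        rw [add_assoc, neg_add_cancel, add_zero] at h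
        exact h.symm } with hK2
  have hKgen : ∀ v : A, (∃ p : A × A, f p = f (p.1, p.2 + v)) →
      ∀ c : A, j (c + v) - j c ∈ K2 := by
    rintro v ⟨p0, hp0⟩ c
    show ∀ y : A × A, f y = f (y.1, y.2 + (j (c + v) - j c))
    intro y
    have h := lemKL j s hs f hf hp0 0 c y
    dsimp only at h
    have e1 : (0 : A) - (p0.1 - p0.1) = 0 := by abel
    have e2 : c + (p0.2 + v - p0.2) = c + v := by abel
    rw [e1, e2, sub_self, add_zero] at h
    exact h
  have hchain : ∀ n, Vchain j x n ≤ K2 := by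
    intro n
    induction n with
    | zero =>
      rw [Vchain]
      apply (AddSubgroup.closure_le _).2
      rintro t ⟨c, rfl⟩
      have h2 := K2.neg_mem (hKgen x hp c)
      simpa using h2
    | succ n ih =>
      rw [Vchain]
      apply sup_le ih
      apply (AddSubgroup.closure_le _).2
      rintro t ⟨c, v, hv, rfl⟩
      have hvK := ih hv
      have hpair : ∃ p : A × A, f p = f (p.1, p.2 + v) := ⟨(0, 0), hvK (0, 0)⟩
      have h2 := K2.neg_mem (hKgen v hpair c)
      simpa using h2
  have hK2top : ∀ b : A, ∀ y : A × A, f y = f (y.1, y.2 + b) := by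
    intro b
    have hb : b ∈ K2 := by
      have h1 : (⨆ n, Vchain j x n) ≤ K2 := iSup_le hchain
      rw [hV x hx] at h1
      exact h1 (AddSubgroup.mem_top b)
    exact hb
  have hK1 : ∀ a : A, ∀ y : A × A, f y = f (y.1 + a, y.2) := by
    intro a y
    have hpq : f ((0 : A), (0 : A)) = f (((0 : A), (0 : A)).1, ((0 : A), (0 : A)).2 + -a) :=
      hK2top (-a) (0, 0)
    have h := lemL j s hs f hf hpq y
    dsimp only at h
    have e1 : y.1 - (0 + -a - 0) = y.1 + a := by abel
    rw [e1, add_sub_cancel_right] at h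
    exact h
  calc f z = f (z.1, z.2 + (z'.2 - z.2)) := hK2top _ z
    _ = f (z.1 + (z'.1 - z.1), z.2 + (z'.2 - z.2)) := hK1 _ _
    _ = f z' := by
        have e : (z.1 + (z'.1 - z.1), z.2 + (z'.2 - z.2)) = z' :=
          Prod.ext (show z.1 + (z'.1 - z.1) = z'.1 by abel)
            (show z.2 + (z'.2 - z.2) = z'.2 by abel)
        rw [e]

lemma lemConst {A Y : Type} [AddCommGroup A] [Nontrivial A] (j : A → A)
    (hV : ∀ a : A, a ≠ 0 → (⨆ n : ℕ, Vchain j a n) = ⊤)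
    (s : Y × Y → Y × Y)
    (hs : ∀ z, Function.Injective fun y => (s (z, y)).1)
    (f : A × A → Y) (hf : IsSolHom (rj j) s f)
    (hne : ∃ p q : A × A, p ≠ q ∧ f p = f q) (z z' : A × A) :
    f z = f z' := by
  refine lemWin j hV s hs f hf ?_ z z'
  obtain ⟨p, q, hpqne, hpq⟩ := hne
  by_cases hδ : q.1 - p.1 = 0
  · -- first coordinates agree
    have hd : q.2 - p.2 ≠ 0 := fun h =>
      hpqne (Prod.ext (sub_eq_zero.1 hδ).symm (sub_eq_zero.1 h).symm)
    refine ⟨q.2 - p.2, hd, p, ?_⟩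
    have e : (p.1, p.2 + (q.2 - p.2)) = q :=
      Prod.ext (show p.1 = q.1 from (sub_eq_zero.1 hδ).symm)
        (show p.2 + (q.2 - p.2) = q.2 by abel)
    rw [e]
    exact hpq
  · have hU := lemKL j s hs f hf hpq
    by_cases ht : ∀ c, j c - j (c - (q.1 - p.1)) = j 0 - j (0 - (q.1 - p.1))
    · -- the map c ↦ j c - j (c - δ) is constant
      have htb : j 0 - j (0 - (q.1 - p.1)) ≠ 0 := by
        obtain ⟨c, hc⟩ := jne j hV hδ
        have h := ht (c + (q.1 - p.1))
        rw [add_sub_cancel_right] at h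
        intro h0
        rw [h0] at h
        exact hc (sub_eq_zero.1 h)
      have htb' : j (0 + (q.1 - p.1)) - j 0 = j 0 - j (0 - (q.1 - p.1)) := by
        have h := ht (0 + (q.1 - p.1))
        rw [add_sub_cancel_right] at h
        exact h
      have htbne : j (0 + (q.1 - p.1)) - j 0 ≠ 0 := by rw [htb']; exact htb
      have hconj := lemConj j s f hf hpq
      have hU2 := lemKL j s hs f hf hconj
      dsimp only at hU2
      by_cases hx : ∀ c', j (c' + (q.2 - j (0 + (q.1 - p.1)) - (p.2 - j 0)))
          = j (c' + (q.2 - p.2))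
      · exfalso
        obtain ⟨c0, hc0⟩ := jne j hV htbne
        have e1 : c0 + (j (0 + (q.1 - p.1)) - j 0) - (q.2 - p.2) + (q.2 - p.2)
            = c0 + (j (0 + (q.1 - p.1)) - j 0) := by abel
        have e2 : c0 + (j (0 + (q.1 - p.1)) - j 0) - (q.2 - p.2)
            + (q.2 - j (0 + (q.1 - p.1)) - (p.2 - j 0)) = c0 := by abel
        have h := hx (c0 + (j (0 + (q.1 - p.1)) - j 0) - (q.2 - p.2))
        rw [e1, e2] at h
        exact hc0 h.symm
      · push_neg at hx
        obtain ⟨c', hc'⟩ := hx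
        have h1 := hU 0 c' ((0 : A), (0 : A))
        have h2 := hU2 0 c' ((0 : A), (0 : A))
        dsimp only at h1 h2
        refine ⟨(j (c' + (q.2 - j (0 + (q.1 - p.1)) - (p.2 - j 0))) - j c')
            - (j (c' + (q.2 - p.2)) - j c'), ?_,
            ((0 : A) + (j 0 - j (0 - (q.1 - p.1))), (0 : A) + (j (c' + (q.2 - p.2)) - j c')),
            ?_⟩
        · intro h0
          exact hc' (sub_left_inj.1 (sub_eq_zero.1 h0))
        · dsimp only
          have e : ((0 : A) + (j 0 - j (0 - (q.1 - p.1))),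
              (0 : A) + (j (c' + (q.2 - p.2)) - j c') +
                ((j (c' + (q.2 - j (0 + (q.1 - p.1)) - (p.2 - j 0))) - j c')
                  - (j (c' + (q.2 - p.2)) - j c')))
              = ((0 : A) + (j 0 - j (0 - (q.1 - p.1))),
                 (0 : A) + (j (c' + (q.2 - j (0 + (q.1 - p.1)) - (p.2 - j 0))) - j c')) := by
            rw [Prod.mk.injEq]
            exact ⟨rfl, by abel⟩
          rw [e]
          exact h1.symm.trans h2
    · -- nonconstant: get a nonzero purely horizontal shift
      push_neg at ht
      obtain ⟨c0, hc0⟩ := ht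
      have h1 := hU 0 0 ((0 : A), (0 : A))
      have h2 := hU c0 0 ((0 : A), (0 : A))
      dsimp only at h1 h2
      set T := j 0 - j (0 - (q.1 - p.1)) with hT
      set Tc := j c0 - j (c0 - (q.1 - p.1)) with hTc
      set E := j ((0 : A) + (q.2 - p.2)) - j 0 with hE
      have ha : Tc - T ≠ 0 := sub_ne_zero.2 hc0
      obtain ⟨u0, hu0⟩ := jne j hV ha
      have hpq2 := h1.symm.trans h2
      have h3 := lemL j s hs f hf hpq2 (u0 + ((0 : A) + Tc) - ((0 : A) + E), (0 : A))
      dsimp only at h3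
      have e1 : u0 + ((0 : A) + Tc) - ((0 : A) + E) + (0 + E) - (0 + Tc) = u0 := by abel
      have e2 : u0 + ((0 : A) + Tc) - ((0 : A) + E) + (0 + E) - (0 + T) = u0 + (Tc - T) := by
        abel
      rw [e1, e2, sub_self, sub_zero] at h3
      refine ⟨j u0 - j (u0 + (Tc - T)), sub_ne_zero.2 (Ne.symm hu0),
        (u0 + ((0 : A) + Tc) - ((0 : A) + E), (0 : A)), ?_⟩
      dsimp only
      have e3 : (u0 + ((0 : A) + Tc) - ((0 : A) + E), (0 : A) + (j u0 - j (u0 + (Tc - T))))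
          = (u0 + ((0 : A) + Tc) - ((0 : A) + E), (0 : A) + j u0 - j (u0 + (Tc - T))) := by
        rw [Prod.mk.injEq]
        exact ⟨rfl, by abel⟩
      rw [e3]
      exact h3


/-- if A is finite non-trivial and V_a = A for every nonzero a ∈ A,
then (A², r) is simple. -/
theorem statement9 {A : Type} [AddCommGroup A] [Finite A] [Nontrivial A] (j : A → A)
    (hj : ∀ a : A, j (-a) = j a)
    (hV : ∀ a : A, a ≠ 0 → (⨆ n : ℕ, Vchain j a n) = ⊤) :
    IsSimpleSol (rj j) := by
  constructor
  · infer_instance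
  · intro Y s hsol f hf hsurj
    by_cases hinj : Function.Injective f
    · exact Or.inl ⟨hinj, hsurj⟩
    · right
      have hs : ∀ z, Function.Injective fun y => (s (z, y)).1 := fun z => (hsol.2.1 z).1
      have hne : ∃ p q : A × A, p ≠ q ∧ f p = f q := by
        simp only [Function.Injective] at hinj
        push_neg at hinj
        obtain ⟨a, b, hab, hne⟩ := hinj
        exact ⟨a, b, hne, hab⟩
      have hconst := lemConst j hV s hs f hf hne
      constructor
      intro y1 y2
      obtain ⟨x1, rfl⟩ := hsurj y1
      obtain ⟨x2, rfl⟩ := hsurj y2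
      exact hconst x1 x2
end

section
/- Let A = Z/(6) and define j_0 = 0, j_1 = j_2 = j_4 = j_5 = 2, j_3 = 5. Then j_a = j_{-a} for all a, and for every nonzero a ∈ Z/(6) the subgroup generated by { j_c - j_{c+a} : c ∈ Z/(6) } equals Z/(6); consequently the associated solution (A², r) of cardinality 36 is simple. -/
/-- The family j on ℤ/(6): j_0 = 0, j_3 = 5, j_1 = j_2 = j_4 = j_5 = 2. -/
def j6 : ZMod 6 → ZMod 6 := fun a => if a = 0 then 0 else if a = 3 then 5 else 2


lemma gen_one {a : ZMod 6} (ha : a ≠ 0) :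
    (1 : ZMod 6) ∈ AddSubgroup.closure {x : ZMod 6 | ∃ c, x = j6 c - j6 (c + a)} := by
  fin_cases a
  · exact absurd rfl ha
  all_goals first
  | exact AddSubgroup.subset_closure ⟨0, by decide⟩
  | · rw [show (1 : ZMod 6) = 3 + 4 by decide]
      exact add_mem (AddSubgroup.subset_closure ⟨3, by decide⟩)
        (AddSubgroup.subset_closure ⟨0, by decide⟩)

lemma closure_top' {a : ZMod 6} (ha : a ≠ 0) :
    AddSubgroup.closure {x : ZMod 6 | ∃ c, x = j6 c - j6 (c + a)} = ⊤ := by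
  have h1 := gen_one ha
  rw [eq_top_iff]
  intro x _
  have hx : x = x.val • (1 : ZMod 6) := by
    rw [nsmul_eq_mul, mul_one]
    exact (ZMod.natCast_rightInverse x).symm
  rw [hx]
  exact AddSubgroup.nsmul_mem _ h1 _

section
variable {R : ZMod 6 × ZMod 6 → ZMod 6 × ZMod 6 → Prop}
  (hrefl : ∀ x, R x x) (hsymm : ∀ {x y}, R x y → R y x)
  (htrans : ∀ {x y z}, R x y → R y z → R x z)
  (hinv : ∀ x x' y y', R x x' → R y y' → R (sigmaFun j6 x y) (sigmaFun j6 x' y'))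

include hrefl hsymm htrans hinv

lemma collapse2 {α β : ZMod 6} (hab : α ≠ β)
    (h : ∀ t u, R (t, u) (t, u + (j6 (t - α) - j6 (t - β)))) :
    ∀ t u u', R (t, u) (t, u') := by
  set D : AddSubgroup (ZMod 6) :=
    { carrier := {d | ∀ t u, R (t, u) (t, u + d)}
      zero_mem' := fun t u => by simpa using hrefl (t, u)
      add_mem' := by
        intro d d' hd hd' t u
        have h2 := hd' t (u + d)
        rw [add_assoc] at h2
        exact htrans (hd t u) h2
      neg_mem' := by
        intro d hd t u
        have h2 := hd t (u + -d)
        have h3 : u + -d + d = u := by ring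
        rw [h3] at h2
        exact hsymm h2 } with hD
  have transport : ∀ (t0 d : ZMod 6), (∀ u, R (t0, u) (t0, u + d)) → d ∈ D := by
    intro t0 d hd t u
    have h2 := hinv ((0 : ZMod 6), t - t0) ((0 : ZMod 6), t - t0)
      (t0, u + j6 t) (t0, u + j6 t + d) (hrefl _) (hd (u + j6 t))
    simp only [sigmaFun] at h2
    ring_nf at h2
    convert h2 using 2
  have hDtop : D = ⊤ := by
    rw [eq_top_iff, ← closure_top' (show α - β ≠ 0 from sub_ne_zero.2 hab)]
    refine (AddSubgroup.closure_le D).2 ?_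
    rintro x ⟨c, rfl⟩
    refine transport (c + α) _ ?_
    intro u
    have h2 := h (c + α) u
    rw [show c + α - α = c by ring, show c + α - β = c + (α - β) by ring] at h2
    exact h2
  intro t u u'
  have hm : u' - u ∈ D := hDtop ▸ AddSubgroup.mem_top _
  have h2 := hm t u
  rwa [show u + (u' - u) = u' by ring] at h2

lemma collapse_all (hc2 : ∀ t u u', R (t, u) (t, u')) : ∀ p q, R p q := by
  have step : ∀ t u u' : ZMod 6, R (t, u) (t + 1, u') := by
    intro t u u'
    have h2 := hinv ((0 : ZMod 6), (0 : ZMod 6)) ((0 : ZMod 6), (1 : ZMod 6))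
      (t, (0 : ZMod 6)) (t, (0 : ZMod 6)) (hc2 0 0 1) (hrefl _)
    simp only [sigmaFun] at h2
    ring_nf at h2
    have h4 := htrans (hc2 t u _) (htrans h2 (hc2 _ _ u'))
    rwa [show (1 : ZMod 6) + t = t + 1 by ring] at h4
  have steps : ∀ (n : ℕ) (t u u' : ZMod 6), R (t, u) (t + (n : ZMod 6), u') := by
    intro n
    induction n with
    | zero => intro t u u'; simpa using hc2 t u u'
    | succ n ih =>
      intro t u u'
      have h1 := ih t u u
      have h2 := step (t + (n : ZMod 6)) u u'
      have h3 : t + ((n : ZMod 6) + 1) = t + (n : ZMod 6) + 1 := by ring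
      rw [show ((n + 1 : ℕ) : ZMod 6) = (n : ZMod 6) + 1 by push_cast; ring, h3]
      exact htrans h1 h2
  rintro ⟨p1, p2⟩ ⟨q1, q2⟩
  obtain ⟨n, hn⟩ : ∃ n : ℕ, (n : ZMod 6) = q1 - p1 :=
    ⟨(q1 - p1).val, ZMod.natCast_rightInverse _⟩
  have h2 := steps n p1 p2 q2
  rwa [hn, show p1 + (q1 - p1) = q1 by ring] at h2

lemma collapse {x x' : ZMod 6 × ZMod 6} (hne : x ≠ x') (hxx : R x x') : ∀ p q, R p q := by
  obtain ⟨a1, a2⟩ := x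
  obtain ⟨b1, b2⟩ := x'
  by_cases he : a2 = b2
  · subst he
    have hab : a1 ≠ b1 := fun h => hne (by rw [h])
    refine collapse_all hrefl hsymm htrans hinv
      (collapse2 hrefl hsymm htrans hinv hab ?_)
    intro t u
    have h2 := hinv (a1, a2) (b1, a2) (t - a2, u + j6 (t - a1)) (t - a2, u + j6 (t - a1))
      hxx (hrefl _)
    simp only [sigmaFun] at h2
    ring_nf at h2 ⊢
    convert h2 using 2
  · have he' : a2 - b2 ≠ 0 := sub_ne_zero.2 he
    have hg : ∀ z1 z2 : ZMod 6,
        R (z1 + (a2 - b2), z2 + (j6 (z1 - b1) - j6 (z1 + (a2 - b2) - a1))) (z1, z2) := by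
      intro z1 z2
      have h2 := hinv (a1, a2) (b1, b2) (z1 - b2, z2 + j6 (z1 - b1)) (z1 - b2, z2 + j6 (z1 - b1))
        hxx (hrefl _)
      simp only [sigmaFun] at h2
      ring_nf at h2 ⊢
      convert h2 using 2
    obtain ⟨c1, hc1⟩ : ∃ c : ZMod 6, j6 (c - b1) = j6 (c + (a2 - b2) - a1) := by
      have hex : ∀ u v : ZMod 6, ∃ c, j6 (c + u) = j6 (c + v) := by decide
      obtain ⟨c, hc⟩ := hex (-b1) (a2 - b2 - a1)
      refine ⟨c, ?_⟩
      rw [show c - b1 = c + -b1 by ring, show c + (a2 - b2) - a1 = c + (a2 - b2 - a1) by ring]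
      exact hc
    have hw : ∀ c2 : ZMod 6, R (c1 + (a2 - b2), c2) (c1, c2) := by
      intro c2
      have h2 := hg c1 c2
      rw [hc1, sub_self, add_zero] at h2
      exact h2
    have hne2 : c1 + (a2 - b2) ≠ c1 := by
      intro h
      exact he' (by linear_combination h)
    refine collapse_all hrefl hsymm htrans hinv
      (collapse2 hrefl hsymm htrans hinv hne2 ?_)
    intro t u
    have h2 := hinv (c1 + (a2 - b2), (0 : ZMod 6)) (c1, (0 : ZMod 6))
      (t, u + j6 (t - (c1 + (a2 - b2)))) (t, u + j6 (t - (c1 + (a2 - b2))))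
      (hw 0) (hrefl _)
    simp only [sigmaFun] at h2
    ring_nf at h2 ⊢
    convert h2 using 2
end

/-- for this family, j_a = j_{-a}, ⟨j_c - j_{c+a} : c⟩ = ℤ/(6) for every
nonzero a, and the associated solution (A², r) of cardinality 36 is simple. -/
theorem statement10 :
    (∀ a : ZMod 6, j6 (-a) = j6 a) ∧
    (∀ a : ZMod 6, a ≠ 0 →
      AddSubgroup.closure {x : ZMod 6 | ∃ c, x = j6 c - j6 (c + a)} = ⊤) ∧
    Nat.card (ZMod 6 × ZMod 6) = 36 ∧
    IsSimpleSol (rj j6) := by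
  refine ⟨by decide, fun a ha => closure_top' ha, by simp [Nat.card_eq_fintype_card], ?_, ?_⟩
  · exact ⟨(0, 0), (1, 0), by decide⟩
  · intro Y s _hs f hf hsurj
    by_cases hinj : Function.Injective f
    · exact Or.inl ⟨hinj, hsurj⟩
    · right
      obtain ⟨x, x', hfx, hne⟩ := Function.not_injective_iff.1 hinj
      set R : ZMod 6 × ZMod 6 → ZMod 6 × ZMod 6 → Prop := fun p q => f p = f q with hR
      have hrefl : ∀ p, R p p := fun p => rfl
      have hsymm : ∀ {p q}, R p q → R q p := fun h => h.symm
      have htrans : ∀ {p q r}, R p q → R q r → R p r := fun h1 h2 => h1.trans h2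
      have hinv : ∀ p p' q q', R p p' → R q q' →
          R (sigmaFun j6 p q) (sigmaFun j6 p' q') := by
        intro p p' q q' h1 h2
        have e1 := hf p q
        have e2 := hf p' q'
        simp only [rj] at e1 e2
        show f _ = f _
        rw [e1, e2, h1, h2]
      have hall : ∀ p q, R p q := collapse hrefl hsymm htrans hinv hne hfx
      constructor
      intro y1 y2
      obtain ⟨p, rfl⟩ := hsurj y1
      obtain ⟨q, rfl⟩ := hsurj y2
      exact hall p q
end

section
/- With A a commutative ring, H the finitely supported functions A → A, α_c(f)(x) = f(x-c), and b(f,g) = Σ_{x,y} f(x) j_{x-y} g(y), form the asymmetric product B = H ⋊∘ A: multiplicative group H ⋊_α A and addition (f,a) + (g,c) = (f+g, a+c+b(f,g)). Then for the lambda map of B and the standard indicator functions e_a (e_a(x) = δ_{a,x}), one has λ_{(e_{a1},a2)}(e_{c1},c2) = (e_{c1+a2}, c2 - j_{a1-(c1+a2)}). Consequently the set X = { (e_a, c) : a,c ∈ A } is invariant under all λ_{(e_{a1},a2)}, and the map (a,c) ↦ (e_a,c) is an isomorphism from the solution (A², r) (with σ_{(a1,a2)}(c1,c2) = (c1+a2,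 c2 - j_{c1+a2-a1})) onto the subsolution on X of the solution associated to the left brace B. -/
/-- The shift action α_c(f)(x) = f(x - c). -/
noncomputable def shiftH {A : Type} [AddCommGroup A] (c : A) (f : A →₀ A) : A →₀ A :=
  Finsupp.mapDomain (· + c) f

/-- The bilinear form b(f,g) = Σ_{x,y} f(x) j_{x-y} g(y). -/
def bform {A : Type} [CommRing A] (j : A → A) (f g : A →₀ A) : A :=
  f.sum fun x fx => g.sum fun y gy => fx * j (x - y) * gy

/-- Multiplication of the asymmetric product B = H ⋊∘ A: (f,a)∘(g,c) = (f + α_a(g), a+c). -/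
noncomputable def circB {A : Type} [CommRing A] (u v : (A →₀ A) × A) : (A →₀ A) × A :=
  (u.1 + shiftH u.2 v.1, u.2 + v.2)

/-- Addition of the asymmetric product: (f,a)+(g,c) = (f+g, a+c+b(f,g)). -/
noncomputable def addB {A : Type} [CommRing A] (j : A → A) (u v : (A →₀ A) × A) : (A →₀ A) × A :=
  (u.1 + v.1, u.2 + v.2 + bform j u.1 v.1)

/-- The additive inverse of (f,a) in the asymmetric product: (-f, -a + b(f,f)). -/
noncomputable def negB {A : Type} [CommRing A] (j : A → A) (u : (A →₀ A) × A) : (A →₀ A) × A :=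
  (-u.1, -u.2 + bform j u.1 u.1)

/-- The lambda map of the asymmetric product: λ_u(v) = -u + u ∘ v. -/
noncomputable def lamB {A : Type} [CommRing A] (j : A → A) (u v : (A →₀ A) × A) :
    (A →₀ A) × A :=
  addB j (negB j u) (circB u v)

/-- The indicator function e_a (e_a(x) = δ_{a,x}). -/
noncomputable def eH {A : Type} [CommRing A] (a : A) : A →₀ A := Finsupp.single a 1

lemma shiftH_eH {A : Type} [CommRing A] (a c : A) : shiftH a (eH c) = eH (c + a) := by
  simp [shiftH, eH, Finsupp.mapDomain_single]

lemma bform_single {A : Type} [CommRing A] (j : A → A) (x y u v : A) :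
    bform j (Finsupp.single x u) (Finsupp.single y v) = u * j (x - y) * v := by
  rw [bform, Finsupp.sum_single_index, Finsupp.sum_single_index] <;> simp

lemma bform_single_add {A : Type} [CommRing A] (j : A → A) (x u : A) (g h : A →₀ A) :
    bform j (Finsupp.single x u) (g + h) =
      bform j (Finsupp.single x u) g + bform j (Finsupp.single x u) h := by
  rw [bform, Finsupp.sum_single_index, Finsupp.sum_add_index']
  · rw [bform, bform, Finsupp.sum_single_index, Finsupp.sum_single_index] <;> simp
  · simp
  · intro y b1 b2; ring
  · simp

lemma lamB_eH {A : Type} [CommRing A] (j : A → A) (a1 a2 c1 c2 : A) :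
    lamB j (eH a1, a2) (eH c1, c2) = (eH (c1 + a2), c2 - j (a1 - (c1 + a2))) := by
  have hb : bform j (-eH a1) (eH a1 + eH (c1 + a2)) =
      -j 0 - j (a1 - (c1 + a2)) := by
    have : (-eH a1 : A →₀ A) = Finsupp.single a1 (-1) := by
      simp [eH, Finsupp.single_neg]
    rw [this, bform_single_add, eH, eH, bform_single, bform_single]
    ring_nf
  have hbj : bform j (eH a1) (eH a1) = j 0 := by
    rw [eH, bform_single]; simp
  simp only [lamB, addB, negB, circB, shiftH_eH, hb, hbj]
  exact Prod.ext (neg_add_cancel_left _ _) (by ring)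

/-- in the asymmetric product B = H ⋊∘ A one has
λ_{(e_{a1},a2)}(e_{c1},c2) = (e_{c1+a2}, c2 - j_{a1-(c1+a2)}); hence
X = {(e_a,c)} is λ-invariant and (a,c) ↦ (e_a,c) is an isomorphism from the
solution (A², r) onto the subsolution on X of the solution associated to B. -/
theorem statement14 {A : Type} [CommRing A] (j : A → A) (hj : ∀ a : A, j (-a) = j a) :
    (∀ a1 a2 c1 c2 : A,
      lamB j (eH a1, a2) (eH c1, c2) = (eH (c1 + a2), c2 - j (a1 - (c1 + a2)))) ∧
    (∀ a1 a2 c1 c2 : A, ∃ d1 d2 : A,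
      lamB j (eH a1, a2) (eH c1, c2) = (eH d1, d2)) ∧
    Function.Injective (fun p : A × A => ((eH p.1, p.2) : (A →₀ A) × A)) ∧
    (∀ p q : A × A,
      ((eH (sigmaFun j p q).1, (sigmaFun j p q).2) : (A →₀ A) × A) =
        lamB j (eH p.1, p.2) (eH q.1, q.2)) ∧
    Set.range (fun p : A × A => ((eH p.1, p.2) : (A →₀ A) × A)) =
      {w : (A →₀ A) × A | ∃ a c : A, w = (eH a, c)} := by
  refine ⟨fun a1 a2 c1 c2 => lamB_eH j a1 a2 c1 c2,
    fun a1 a2 c1 c2 => ⟨c1 + a2, c2 - j (a1 - (c1 + a2)), lamB_eH j a1 a2 c1 c2⟩,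
    ?_, ?_, ?_⟩
  · intro p q h
    simp only [Prod.mk.injEq] at h
    obtain ⟨h1, h2⟩ := h
    by_cases hpq : q.1 = p.1
    · exact Prod.ext hpq.symm h2
    · have := DFunLike.congr_fun h1 p.1
      simp [eH, Finsupp.single_apply, hpq] at this
      have : Subsingleton A := subsingleton_of_zero_eq_one this.symm
      exact Prod.ext (Subsingleton.elim _ _) h2
  · intro p q
    rw [lamB_eH, sigmaFun]
    have : j (p.1 - (q.1 + p.2)) = j (q.1 + p.2 - p.1) := by
      rw [← hj (q.1 + p.2 - p.1)]; ring_nf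
    rw [this]
  · ext w
    constructor
    · rintro ⟨p, rfl⟩; exact ⟨p.1, p.2, rfl⟩
    · rintro ⟨a, c, rfl⟩; exact ⟨(a, c), rfl⟩
end

section
/- Let p be a prime with p = 2k+1 and k odd (i.e., p ≡ 3 mod 4). Let A = Z/(2p) and define j_i = -j_{p-i} = -j_{p+i} = j_{2p-i} = 2i-1 for i = 1, …, k, and j_0 = -j_p = -2·Σ_{i=1}^k (-1)^i j_i. Then j_0 = 2k in Z/(2p), j_a = j_{-a} for all a, and for every nonzero u ∈ A the subgroup V_u (with V_{u,1} = ⟨ j_c - j_{c+u} : c ∈ A ⟩ and the inductive extension) equals A; hence the associated solution (A², r) is simple. -/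
set_option linter.unusedSectionVars false



def par (p : ℕ) : ZMod (2*p) →+* ZMod 2 := ZMod.castHom (Dvd.intro p rfl) (ZMod 2)

lemma par_nat (p n : ℕ) : par p (n : ZMod (2*p)) = (n : ZMod 2) := map_natCast _ _

lemma zmod2_cases (u : ZMod 2) : u = 0 ∨ u = 1 := by revert u; decide

lemma nat_zmod2 (n : ℕ) : ((n : ZMod 2) = 1) ↔ n % 2 = 1 := by
  rw [← ZMod.natCast_mod n 2]
  rcases Nat.mod_two_eq_zero_or_one n with h | h <;> rw [h] <;> simp

lemma cast_inj' (p : ℕ) [NeZero (2*p)] {m n : ℕ} (hm : m < 2*p) (hn : n < 2*p)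
    (h : (m : ZMod (2*p)) = n) : m = n := by
  have h1 : ((m : ℕ) : ZMod (2*p)).val = m := ZMod.val_cast_of_lt hm
  have h2 : ((n : ℕ) : ZMod (2*p)).val = n := ZMod.val_cast_of_lt hn
  rw [h] at h1; omega


lemma cast_ne_zero' (p : ℕ) (hp3 : 3 ≤ p) {m : ℕ} (h1 : 0 < m) (h2 : m < 2*p) :
    ((m:ℕ) : ZMod (2*p)) ≠ 0 := by
  haveI : NeZero (2*p) := ⟨by omega⟩
  intro h
  have hv := ZMod.val_cast_of_lt h2
  rw [h, ZMod.val_zero] at hv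
  omega

lemma top_of_mem_unit {n : ℕ} [NeZero n] (V : AddSubgroup (ZMod n)) {v : ZMod n}
    (hv : v ∈ V) (hu : IsUnit v) : V = ⊤ := by
  obtain ⟨w, hw⟩ := IsUnit.exists_left_inv hu
  rw [eq_top_iff]
  intro x _
  have hx : x = (x * w).val • v := by
    rw [nsmul_eq_mul, ZMod.natCast_zmod_val, mul_assoc, hw, mul_one]
  rw [hx]
  exact AddSubgroup.nsmul_mem V hv _

lemma isUnit_of_odd (k p : ℕ) (hp : p = 2*k+1) (hpp : p.Prime) [NeZero (2*p)]
    (o : ZMod (2*p)) (hodd : par p o = 1) (hop : o ≠ (p : ZMod (2*p))) : IsUnit o := by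
  have hov : o = ((o.val : ℕ) : ZMod (2*p)) := (ZMod.natCast_zmod_val o).symm
  rw [hov, ZMod.isUnit_iff_coprime]
  have h2 : o.val % 2 = 1 := by
    rw [← nat_zmod2, ← par_nat p, ← hov]; exact hodd
  have hlt : o.val < 2*p := ZMod.val_lt o
  have hcop : Nat.Coprime o.val p := by
    rcases Nat.coprime_or_dvd_of_prime hpp o.val with h | h
    · exact Nat.coprime_comm.mp h
    · exfalso
      obtain ⟨c, hc⟩ := h
      have hc1 : c = 1 := by
        rcases c with _ | _ | c
        · omega
        · rfl
        · exfalso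
          have h5 : 2*p ≤ o.val := by rw [hc]; nlinarith
          omega
      apply hop
      rw [hov, hc, hc1, mul_one]
  have hcop2 : Nat.Coprime o.val 2 := by
    have := (Nat.Prime.coprime_iff_not_dvd Nat.prime_two).mpr (by omega : ¬ 2 ∣ o.val)
    exact Nat.coprime_comm.mp this
  exact Nat.Coprime.mul_right hcop2 hcop

lemma alt_sum (k : ℕ) : ∑ i ∈ Finset.Icc 1 k, ((-1:ℤ)^i * (2*i-1)) = (-1)^k * k := by
  induction k with
  | zero => simp
  | succ n ih =>
      rw [Finset.sum_Icc_succ_top (by omega : 1 ≤ n+1), ih]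
      push_cast
      ring

section main
variable (k p : ℕ)

lemma classify (hp : p = 2*k+1) (a : ZMod (2*p)) :
    a = 0 ∨ a = (p : ZMod (2*p)) ∨ ∃ i : ℕ, 1 ≤ i ∧ i ≤ k ∧
      (a = (i : ZMod (2*p)) ∨ a = -(i : ZMod (2*p)) ∨
       a = (p : ZMod (2*p)) + (i : ZMod (2*p)) ∨ a = (p : ZMod (2*p)) - (i : ZMod (2*p))) := by
  haveI : NeZero (2*p) := ⟨by omega⟩
  set m := a.val with hm
  have hlt : m < 2*p := ZMod.val_lt a
  have ha : a = ((m : ℕ) : ZMod (2*p)) := (ZMod.natCast_zmod_val a).symm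
  have hcases : m = 0 ∨ (1 ≤ m ∧ m ≤ k) ∨ (k+1 ≤ m ∧ m ≤ 2*k) ∨ m = p ∨
      (p+1 ≤ m ∧ m ≤ p+k) ∨ (p+k+1 ≤ m ∧ m ≤ 2*p - 1) := by omega
  rcases hcases with h | h | h | h | h | h
  · left; rw [ha, h]; simp
  · right; right; exact ⟨m, h.1, h.2, Or.inl ha⟩
  · right; right
    refine ⟨p - m, by omega, by omega, Or.inr (Or.inr (Or.inr ?_))⟩
    rw [ha, eq_sub_iff_add_eq, ← Nat.cast_add]
    congr 1; omega
  · right; left; rw [ha, h]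
  · right; right
    refine ⟨m - p, by omega, by omega, Or.inr (Or.inr (Or.inl ?_))⟩
    rw [ha, ← Nat.cast_add]
    congr 1; omega
  · right; right
    refine ⟨2*p - m, by omega, by omega, Or.inr (Or.inl ?_)⟩
    rw [ha, eq_neg_iff_add_eq_zero, ← Nat.cast_add]
    have : m + (2*p - m) = 2*p := by omega
    rw [this, ZMod.natCast_self]

variable (j : ZMod (2 * p) → ZMod (2 * p))

variable (hk : Odd k) (hp : p = 2 * k + 1)
variable (hj1 : ∀ i : ℕ, 1 ≤ i → i ≤ k →
      j (i : ZMod (2 * p)) = 2 * (i : ZMod (2 * p)) - 1 ∧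
      j ((p : ZMod (2 * p)) - (i : ZMod (2 * p))) = -(2 * (i : ZMod (2 * p)) - 1) ∧
      j ((p : ZMod (2 * p)) + (i : ZMod (2 * p))) = -(2 * (i : ZMod (2 * p)) - 1) ∧
      j (((2 * p : ℕ) : ZMod (2 * p)) - (i : ZMod (2 * p))) = 2 * (i : ZMod (2 * p)) - 1)

include hj1 in
lemma jval_neg (i : ℕ) (h1 : 1 ≤ i) (h2 : i ≤ k) :
    j (-(i : ZMod (2*p))) = 2 * (i : ZMod (2*p)) - 1 := by
  have := (hj1 i h1 h2).2.2.2
  rwa [ZMod.natCast_self, zero_sub] at this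

include hk hp hj1 in
lemma jzero (hj0 : j 0 = -2 * ∑ i ∈ Finset.Icc 1 k, (-1 : ZMod (2 * p)) ^ i * j (i : ZMod (2 * p))) :
    j 0 = 2 * (k : ZMod (2*p)) := by
  rw [hj0]
  have hsum : ∑ i ∈ Finset.Icc 1 k, (-1 : ZMod (2 * p)) ^ i * j (i : ZMod (2 * p))
      = ((∑ i ∈ Finset.Icc 1 k, ((-1:ℤ)^i * (2*i-1)) : ℤ) : ZMod (2*p)) := by
    push_cast
    refine Finset.sum_congr rfl fun i hi => ?_
    rw [Finset.mem_Icc] at hi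
    rw [(hj1 i hi.1 hi.2).1]
  rw [hsum, alt_sum, Odd.neg_one_pow hk]
  push_cast
  ring

end main
section main2
variable (k p : ℕ) (j : ZMod (2 * p) → ZMod (2 * p))
variable (hk : Odd k) (hp : p = 2 * k + 1)
variable (hj1 : ∀ i : ℕ, 1 ≤ i → i ≤ k →
      j (i : ZMod (2 * p)) = 2 * (i : ZMod (2 * p)) - 1 ∧
      j ((p : ZMod (2 * p)) - (i : ZMod (2 * p))) = -(2 * (i : ZMod (2 * p)) - 1) ∧
      j ((p : ZMod (2 * p)) + (i : ZMod (2 * p))) = -(2 * (i : ZMod (2 * p)) - 1) ∧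
      j (((2 * p : ℕ) : ZMod (2 * p)) - (i : ZMod (2 * p))) = 2 * (i : ZMod (2 * p)) - 1)
variable (hjp : j (p : ZMod (2 * p)) = -j 0)

omit hk in
include hp in
lemma negp : -(p : ZMod (2*p)) = (p : ZMod (2*p)) := by
  rw [neg_eq_iff_add_eq_zero, ← Nat.cast_add]
  have : p + p = 2*p := by omega
  rw [this, ZMod.natCast_self]

omit hk in
include hp hj1 in
lemma jneg : ∀ a : ZMod (2*p), j (-a) = j a := by
  intro a
  rcases classify k p hp a with h | h | ⟨i, h1, h2, h | h | h | h⟩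
  · rw [h, neg_zero]
  · rw [h, negp k p hp]
  · rw [h, jval_neg k p j hj1 i h1 h2, (hj1 i h1 h2).1]
  · rw [h, neg_neg, jval_neg k p j hj1 i h1 h2, (hj1 i h1 h2).1]
  · rw [h, neg_add, negp k p hp, ← sub_eq_add_neg, (hj1 i h1 h2).2.1, (hj1 i h1 h2).2.2.1]
  · rw [h, neg_sub, sub_eq_add_neg, negp k p hp, add_comm, (hj1 i h1 h2).2.2.1,
      (hj1 i h1 h2).2.1]

omit hk in
include hp hj1 hjp in
lemma jp_shift : ∀ a : ZMod (2*p), j ((p : ZMod (2*p)) + a) = - j a := by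
  have hpp0 : (p : ZMod (2*p)) + (p : ZMod (2*p)) = 0 := by
    rw [← Nat.cast_add]
    have : p + p = 2*p := by omega
    rw [this, ZMod.natCast_self]
  intro a
  rcases classify k p hp a with h | h | ⟨i, h1, h2, h | h | h | h⟩
  · rw [h, add_zero, hjp]
  · rw [h, hpp0, hjp, neg_neg]
  · rw [h, (hj1 i h1 h2).2.2.1, (hj1 i h1 h2).1]
  · rw [h, ← sub_eq_add_neg, (hj1 i h1 h2).2.1, jval_neg k p j hj1 i h1 h2]
  · rw [h, ← add_assoc, hpp0, zero_add, (hj1 i h1 h2).1, (hj1 i h1 h2).2.2.1, neg_neg]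
  · rw [h, add_sub_assoc', hpp0, zero_sub, jval_neg k p j hj1 i h1 h2,
      (hj1 i h1 h2).2.1, neg_neg]

omit hk in
include hp hj1 hjp in
lemma jp_sub : ∀ a : ZMod (2*p), j ((p : ZMod (2*p)) - a) = - j a := by
  intro a
  have h := jp_shift k p j hp hj1 hjp (-a)
  rw [jneg k p j hp hj1 a] at h
  rwa [← sub_eq_add_neg] at h

omit hk in
include hp hj1 in
lemma jphi (a : ZMod (2*p)) (h0 : a ≠ 0) (hpa : a ≠ (p : ZMod (2*p))) :
    par p (j a) = 1 := by
  have key : ∀ x : ZMod 2, (2*x - 1 = 1 ∧ -(2*x-1) = 1) := by decide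
  rcases classify k p hp a with h | h | ⟨i, h1, h2, h | h | h | h⟩
  · exact absurd h h0
  · exact absurd h hpa
  · rw [h, (hj1 i h1 h2).1]
    simp only [map_sub, map_mul, map_one, map_ofNat, par_nat]
    exact (key _).1
  · rw [h, jval_neg k p j hj1 i h1 h2]
    simp only [map_sub, map_mul, map_one, map_ofNat, par_nat]
    exact (key _).1
  · rw [h, (hj1 i h1 h2).2.2.1]
    simp only [map_neg, map_sub, map_mul, map_one, map_ofNat, par_nat]
    exact (key _).2
  · rw [h, (hj1 i h1 h2).2.1]
    simp only [map_neg, map_sub, map_mul, map_one, map_ofNat, par_nat]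
    exact (key _).2

omit hk in
include hp in
lemma par_p : par p ((p : ZMod (2*p))) = 1 := by
  rw [par_nat, hp]
  have key : ∀ x : ZMod 2, 2*x + 1 = 1 := by decide
  push_cast
  exact key _

lemma par_two_k (hjz : j 0 = 2 * (k : ZMod (2*p))) : par p (j 0) = 0 := by
  rw [hjz]
  have key : ∀ x : ZMod 2, 2*x = 0 := by decide
  simp only [map_mul, map_ofNat, par_nat]
  exact key _

end main2
section main3
variable (k p : ℕ) (j : ZMod (2 * p) → ZMod (2 * p))
variable (hk : Odd k) (hp : p = 2 * k + 1)
variable (hj1 : ∀ i : ℕ, 1 ≤ i → i ≤ k →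
      j (i : ZMod (2 * p)) = 2 * (i : ZMod (2 * p)) - 1 ∧
      j ((p : ZMod (2 * p)) - (i : ZMod (2 * p))) = -(2 * (i : ZMod (2 * p)) - 1) ∧
      j ((p : ZMod (2 * p)) + (i : ZMod (2 * p))) = -(2 * (i : ZMod (2 * p)) - 1) ∧
      j (((2 * p : ℕ) : ZMod (2 * p)) - (i : ZMod (2 * p))) = 2 * (i : ZMod (2 * p)) - 1)
variable (hjp : j (p : ZMod (2 * p)) = -j 0)

omit hk in
include hp hj1 in
lemma jodd_surj (y : ZMod (2*p)) (hy : par p y = 1) (hyp : y ≠ (p : ZMod (2*p))) :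
    ∃ w, j w = y := by
  haveI : NeZero (2*p) := ⟨by omega⟩
  set m := y.val with hmdef
  have hlt : m < 2*p := ZMod.val_lt y
  have hym : y = ((m : ℕ) : ZMod (2*p)) := (ZMod.natCast_zmod_val y).symm
  have hmo : m % 2 = 1 := by
    rw [← nat_zmod2, ← par_nat p, ← hym]; exact hy
  have hmp : m ≠ p := by
    intro h; exact hyp (by rw [hym, h])
  rcases Nat.lt_or_ge m p with h | h
  · set i := (m+1)/2 with hi
    have h1 : 1 ≤ i := by omega
    have h2 : i ≤ k := by omega
    have hmi : 2*i - 1 = m := by omega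
    refine ⟨(i : ZMod (2*p)), ?_⟩
    rw [(hj1 i h1 h2).1, hym, ← hmi]
    rw [Nat.cast_sub (by omega : 1 ≤ 2*i)]
    push_cast; ring
  · have hgt : p + 2 ≤ m := by omega
    set i := (2*p - m + 1)/2 with hi
    have h1 : 1 ≤ i := by omega
    have h2 : i ≤ k := by omega
    refine ⟨(p : ZMod (2*p)) + (i : ZMod (2*p)), ?_⟩
    rw [(hj1 i h1 h2).2.2.1, hym]
    have hsum : ((2*i - 1 : ℕ) : ZMod (2*p)) + ((m : ℕ) : ZMod (2*p)) = 0 := by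
      rw [← Nat.cast_add]
      have : 2*i - 1 + m = 2*p := by omega
      rw [this, ZMod.natCast_self]
    have := neg_eq_of_add_eq_zero_right hsum
    rw [← this]
    congr 1
    rw [Nat.cast_sub (by omega : 1 ≤ 2*i)]
    push_cast; ring

include hk hp hj1 hjp in
lemma cov (hjz : j 0 = 2 * (k : ZMod (2*p)))
    (z : ZMod (2*p)) : ∃ w w', j w + j w' = z := by
  haveI : NeZero (2*p) := ⟨by omega⟩
  have hk1 : 1 ≤ k := hk.pos
  have h6 : 6 ≤ 2*p := by omega
  have hneg1 : (-1 : ZMod 2) = 1 := by decide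
  have cast1 : (1 : ZMod (2*p)) = ((1:ℕ) : ZMod (2*p)) := by push_cast; ring
  have cast3 : (3 : ZMod (2*p)) = ((3:ℕ) : ZMod (2*p)) := by push_cast; ring
  have hp1 : (1 : ZMod (2*p)) ≠ (p : ZMod (2*p)) := by
    rw [cast1]; intro h
    have := cast_inj' p (by omega) (by omega) h
    omega
  have h13 : (1 : ZMod (2*p)) ≠ (3 : ZMod (2*p)) := by
    rw [cast1, cast3]; intro h
    have := cast_inj' p (by omega) (by omega) h
    omega
  have hm1p : (-1 : ZMod (2*p)) ≠ (p : ZMod (2*p)) := by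
    intro h
    rw [neg_eq_iff_add_eq_zero] at h
    exact cast_ne_zero' p (by omega) (by omega : 0 < 1 + p) (by omega)
      (by push_cast; linear_combination h)
  have h1m1 : (1 : ZMod (2*p)) ≠ (-1 : ZMod (2*p)) := by
    intro h
    rw [eq_neg_iff_add_eq_zero] at h
    exact cast_ne_zero' p (by omega) (by omega : 0 < 2) (by omega)
      (by push_cast; linear_combination h)
  have h3m1 : (3 : ZMod (2*p)) ≠ (-1 : ZMod (2*p)) := by
    intro h
    rw [eq_neg_iff_add_eq_zero] at h
    exact cast_ne_zero' p (by omega) (by omega : 0 < 4) (by omega)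
      (by push_cast; linear_combination h)
  have par1 : par p (1 : ZMod (2*p)) = 1 := map_one _
  have par3 : par p (3 : ZMod (2*p)) = 1 := by
    rw [cast3, par_nat]; decide
  have parm1 : par p (-1 : ZMod (2*p)) = 1 := by
    rw [map_neg, map_one]; exact hneg1
  have parP : par p ((p:ℕ) : ZMod (2*p)) = 1 := par_p k p hp
  have par0 : par p (j 0) = 0 := par_two_k k p j hjz
  rcases zmod2_cases (par p z) with hz | hz
  · -- z even
    have hgood : ∃ o : ZMod (2*p), par p o = 1 ∧ o ≠ (p : ZMod (2*p)) ∧ o ≠ z - p := by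
      by_cases hA : (1 : ZMod (2*p)) = z - p
      · by_cases hB : (3 : ZMod (2*p)) = (p : ZMod (2*p))
        · exact ⟨-1, parm1, hm1p, by rw [← hA]; exact fun h => h1m1 h.symm⟩
        · exact ⟨3, par3, hB, by rw [← hA]; exact fun h => h13 h.symm⟩
      · exact ⟨1, par1, hp1, hA⟩
    obtain ⟨o, ho1, hop, hozp⟩ := hgood
    have hzo_par : par p (z - o) = 1 := by
      rw [map_sub, hz, ho1, zero_sub]; exact hneg1
    have hzo_p : z - o ≠ (p : ZMod (2*p)) := by
      intro h; apply hozp; rw [← h]; ring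
    obtain ⟨w, hw⟩ := jodd_surj k p j hp hj1 o ho1 hop
    obtain ⟨w', hw'⟩ := jodd_surj k p j hp hj1 (z - o) hzo_par hzo_p
    exact ⟨w, w', by rw [hw, hw']; ring⟩
  · -- z odd
    have hm1 : ((p : ZMod (2*p))) + 2*(k : ZMod (2*p)) = -1 := by
      rw [eq_neg_iff_add_eq_zero]
      have : ((p + 2*k + 1 : ℕ) : ZMod (2*p)) = 0 := by
        have : p + 2*k + 1 = 2*p := by omega
        rw [this, ZMod.natCast_self]
      push_cast at this
      linear_combination this
    by_cases hz1 : z = -1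
    · refine ⟨(p : ZMod (2*p)), (k : ZMod (2*p)), ?_⟩
      rw [hjp, hjz, (hj1 k hk1 le_rfl).1, hz1]
      ring
    · set y := z - 2*(k : ZMod (2*p)) with hy
      have hpary : par p y = 1 := by
        rw [hy, map_sub, hz, map_mul, map_ofNat, par_nat]
        have : ∀ x : ZMod 2, 1 - 2*x = 1 := by decide
        exact this _
      have hyp : y ≠ (p : ZMod (2*p)) := by
        intro h
        apply hz1
        have : z = (p : ZMod (2*p)) + 2*(k : ZMod (2*p)) := by
          rw [← h, hy]; ring
        rw [this, hm1]
      obtain ⟨w', hw'⟩ := jodd_surj k p j hp hj1 y hpary hyp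
      exact ⟨0, w', by rw [hjz, hw', hy]; ring⟩

end main3

section vpart
variable (k p : ℕ) (j : ZMod (2 * p) → ZMod (2 * p))
variable (hk : Odd k) (hp : p = 2 * k + 1) (hpp : p.Prime)
variable (hj1 : ∀ i : ℕ, 1 ≤ i → i ≤ k →
      j (i : ZMod (2 * p)) = 2 * (i : ZMod (2 * p)) - 1 ∧
      j ((p : ZMod (2 * p)) - (i : ZMod (2 * p))) = -(2 * (i : ZMod (2 * p)) - 1) ∧
      j ((p : ZMod (2 * p)) + (i : ZMod (2 * p))) = -(2 * (i : ZMod (2 * p)) - 1) ∧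
      j (((2 * p : ℕ) : ZMod (2 * p)) - (i : ZMod (2 * p))) = 2 * (i : ZMod (2 * p)) - 1)
variable (hjp : j (p : ZMod (2 * p)) = -j 0)

include hk hp hpp hj1 hjp in
lemma vtop (hjz : j 0 = 2 * (k : ZMod (2*p))) (u : ZMod (2*p)) (hu : u ≠ 0) :
    (⨆ n : ℕ, Vchain j u n) = ⊤ := by
  haveI : NeZero (2*p) := ⟨by omega⟩
  have hk1 : 1 ≤ k := hk.pos
  have gen0 : ∀ c, j c - j (c + u) ∈ Vchain j u 0 :=
    fun c => AddSubgroup.subset_closure ⟨c, rfl⟩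
  have gen1 : ∀ n c v, v ∈ Vchain j u n → j c - j (c + v) ∈ Vchain j u (n+1) :=
    fun n c v hv => AddSubgroup.mem_sup_right (AddSubgroup.subset_closure ⟨c, v, hv, rfl⟩)
  have mono : ∀ n, Vchain j u n ≤ Vchain j u (n+1) := fun n => le_sup_left
  have sup_top : ∀ n, Vchain j u n = ⊤ → (⨆ n : ℕ, Vchain j u n) = ⊤ := by
    intro n h
    refine le_antisymm le_top ?_
    rw [← h]
    exact le_iSup (fun n => Vchain j u n) n
  have j1 : j 1 = 1 := by
    have := (hj1 1 le_rfl hk1).1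
    rw [Nat.cast_one] at this
    rw [this]; ring
  have j1p : ∀ o : ZMod (2*p), o = (p : ZMod (2*p)) → j 1 - j (1 + o) = 2 := by
    intro o ho
    rw [ho, add_comm, jp_shift k p j hp hj1 hjp 1, j1]
    ring
  have cast2 : (2 : ZMod (2*p)) = ((2:ℕ) : ZMod (2*p)) := by push_cast; ring
  have par2 : par p (2 : ZMod (2*p)) = 0 := by
    rw [cast2, par_nat]; decide
  have h2ne : (2 : ZMod (2*p)) ≠ 0 := by
    rw [cast2]; exact cast_ne_zero' p (by omega) (by omega) (by omega)
  have h2np : (2 : ZMod (2*p)) ≠ (p : ZMod (2*p)) := by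
    intro h
    have := par_p k p hp
    rw [← h, par2] at this
    exact absurd this (by decide)
  have finish_odd : ∀ n (o : ZMod (2*p)), o ∈ Vchain j u n → par p o = 1 →
      (⨆ n : ℕ, Vchain j u n) = ⊤ := by
    intro n o ho hodd
    by_cases hop : o = (p : ZMod (2*p))
    · have h2 : (2 : ZMod (2*p)) ∈ Vchain j u (n+1) := by
        rw [← j1p o hop]; exact gen1 n 1 o ho
      have hp2 : (p : ZMod (2*p)) + 2 ∈ Vchain j u (n+1) := by
        have := AddSubgroup.add_mem _ (mono n (hop ▸ ho)) h2
        exact this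
      have hunit : IsUnit ((p : ZMod (2*p)) + 2) := by
        apply isUnit_of_odd k p hp hpp
        · rw [map_add, par_p k p hp, par2]; ring
        · intro h
          have : (2 : ZMod (2*p)) = 0 := by linear_combination h
          exact h2ne this
      exact sup_top (n+1) (top_of_mem_unit _ hp2 hunit)
    · exact sup_top n (top_of_mem_unit _ ho (isUnit_of_odd k p hp hpp o hodd hop))
  by_cases hup : u = (p : ZMod (2*p))
  · have h2 : (2 : ZMod (2*p)) ∈ Vchain j u 0 := by
      rw [← j1p u hup]; exact gen0 1
    have ho : j 0 - j (0 + 2) ∈ Vchain j u 1 := gen1 0 0 2 h2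
    rw [zero_add] at ho
    refine finish_odd 1 _ ho ?_
    rw [map_sub, par_two_k k p j hjz, jphi k p j hp hj1 2 h2ne h2np, zero_sub]
    decide
  · have ho : j 0 - j (0 + u) ∈ Vchain j u 0 := gen0 0
    rw [zero_add] at ho
    refine finish_odd 0 _ ho ?_
    rw [map_sub, par_two_k k p j hjz, jphi k p j hp hj1 u hu hup, zero_sub]
    decide
end vpart
section simple
variable (k p : ℕ) (j : ZMod (2 * p) → ZMod (2 * p))
variable {Y : Type} (s : Y × Y → Y × Y) (f : ZMod (2*p) × ZMod (2*p) → Y)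

set_option maxHeartbeats 1000000 in
lemma collapse_lemma
    (hk1 : 1 ≤ k) (hp : p = 2 * k + 1) (hpp : p.Prime)
    (hcov : ∀ z : ZMod (2*p), ∃ w w', j w + j w' = z)
    (hSH : ∀ a : ZMod (2*p), j ((p : ZMod (2*p)) + a) = - j a)
    (hSUB : ∀ a : ZMod (2*p), j ((p : ZMod (2*p)) - a) = - j a)
    (hPHI : ∀ a : ZMod (2*p), a ≠ 0 → a ≠ (p : ZMod (2*p)) → par p (j a) = 1)
    (hPHI0 : par p (j 0) = 0)
    (hparp : par p ((p : ZMod (2*p))) = 1)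
    (hjz : j 0 = 2 * (k : ZMod (2*p)))
    (hj1v : j 1 = 1)
    (hf : IsSolHom (rj j) s f)
    (a b : ZMod (2*p) × ZMod (2*p)) (hfab : f a = f b) (hab : a ≠ b) :
    ∀ q q' : ZMod (2*p) × ZMod (2*p), f q = f q' := by
  haveI : NeZero (2*p) := ⟨by omega⟩
  have hp3 : 3 ≤ p := by omega
  -- numeric facts
  have cast2 : (2 : (ZMod (2*p))) = ((2:ℕ) : (ZMod (2*p))) := by push_cast; ring
  have cast4 : (4 : (ZMod (2*p))) = ((4:ℕ) : (ZMod (2*p))) := by push_cast; ring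
  have h2ne : (2 : (ZMod (2*p))) ≠ 0 := by rw [cast2]; exact cast_ne_zero' p hp3 (by omega) (by omega)
  have h4ne : (4 : (ZMod (2*p))) ≠ 0 := by rw [cast4]; exact cast_ne_zero' p hp3 (by omega) (by omega)
  have h24 : (2 : (ZMod (2*p))) ≠ (4 : (ZMod (2*p))) := by
    rw [cast2, cast4]; intro h
    have := cast_inj' p (by omega) (by omega) h
    omega
  have par2 : par p (2 : (ZMod (2*p))) = 0 := by rw [cast2, par_nat]; decide
  have par4 : par p (4 : (ZMod (2*p))) = 0 := by rw [cast4, par_nat]; decide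
  have par01 : (0 : ZMod 2) ≠ 1 := by decide
  have h2np : (2 : (ZMod (2*p))) ≠ (p : (ZMod (2*p))) := fun h => par01 (by rw [← par2, h, hparp])
  have h4np : (4 : (ZMod (2*p))) ≠ (p : (ZMod (2*p))) := fun h => par01 (by rw [← par4, h, hparp])
  have isunit : ∀ o : (ZMod (2*p)), par p o = 1 → o ≠ (p : (ZMod (2*p))) → IsUnit o :=
    fun o h1 h2 => isUnit_of_odd k p hp hpp o h1 h2
  -- transport helper
  have tr : ∀ (x1 x2 y1 y2 x1' x2' y1' y2' : (ZMod (2*p))), f (x1, x2) = f (y1, y2) →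
      x1 = x1' → x2 = x2' → y1 = y1' → y2 = y2' → f (x1', x2') = f (y1', y2') := by
    intro x1 x2 y1 y2 x1' x2' y1' y2' h e1 e2 e3 e4
    rw [← e1, ← e2, ← e3, ← e4]; exact h
  -- basic compatibility
  have hf' : ∀ x y : (ZMod (2*p)) × (ZMod (2*p)), f (sigmaFun j x y) = (s (f x, f y)).1 := fun x y => hf x y
  have KK : ∀ a1 a2 b1 b2 c1 c2 d1 d2 : (ZMod (2*p)), f (a1,a2) = f (b1,b2) → f (c1,c2) = f (d1,d2) →
      f (c1 + a2, c2 - j (c1 + a2 - a1)) = f (d1 + b2, d2 - j (d1 + b2 - b1)) := by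
    intro a1 a2 b1 b2 c1 c2 d1 d2 h1 h2
    have e1 := hf' (a1,a2) (c1,c2)
    have e2 := hf' (b1,b2) (d1,d2)
    simp only [sigmaFun] at e1 e2
    rw [e1, e2, h1, h2]
  -- single sigma-step on a related pair of points
  have ACT : ∀ a1 a2 b1 b2 : (ZMod (2*p)), f (a1,a2) = f (b1,b2) → ∀ t w : (ZMod (2*p)),
      f (t, a2 - j w) = f (t + (b1 - a1), b2 - j (w + (b1 - a1))) := by
    intro a1 a2 b1 b2 h t w
    have h2 := KK (t - w) (t - a1) (t - w) (t - a1) a1 a2 b1 b2 rfl h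
    refine tr _ _ _ _ _ _ _ _ h2 (by ring) ?_ (by ring) ?_
    · rw [show a1 + (t - a1) - (t - w) = w by ring]
    · rw [show b1 + (t - a1) - (t - w) = w + (b1 - a1) by ring]
  -- double sigma-step
  have ACT2 : ∀ a1 a2 b1 b2 : (ZMod (2*p)), f (a1,a2) = f (b1,b2) → ∀ t w w' : (ZMod (2*p)),
      f (t, a2 - (j w + j w')) =
        f (t + (b1 - a1), b2 - (j (w + (b1 - a1)) + j (w' + (b1 - a1)))) := by
    intro a1 a2 b1 b2 h t w w'
    have h1 := ACT a1 a2 b1 b2 h t w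
    have h2 := ACT t (a2 - j w) (t + (b1 - a1)) (b2 - j (w + (b1 - a1))) h1 t w'
    refine tr _ _ _ _ _ _ _ _ h2 rfl (by ring) (by ring) ?_
    rw [show w' + (t + (b1 - a1) - t) = w' + (b1 - a1) by ring]
    ring
  -- vertical pair gives uniform vertical relation
  have VSTEP : ∀ a1 a2 b2 : (ZMod (2*p)), f (a1, a2) = f (a1, b2) → ∀ t u : (ZMod (2*p)),
      f (t, u) = f (t, u + (b2 - a2)) := by
    intro a1 a2 b2 h t u
    obtain ⟨w, w', hww⟩ := hcov (a2 - u)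
    have h2 := ACT2 a1 a2 a1 b2 h t w w'
    refine tr _ _ _ _ _ _ _ _ h2 rfl (by rw [hww]; ring) (by ring) ?_
    rw [show w + (a1 - a1) = w by ring, show w' + (a1 - a1) = w' by ring, hww]
    ring
  -- horizontal move from a uniform vertical relation
  have HOR : ∀ v : (ZMod (2*p)), (∀ t u : (ZMod (2*p)), f (t, u) = f (t, u + v)) → ∀ y z w : (ZMod (2*p)),
      f (y, z) = f (y + v, z + (j w - j (w + v))) := by
    intro v hv y z w
    have hvv : f (y - w, 0) = f (y - w, v) :=
      tr _ _ _ _ _ _ _ _ (hv (y - w) 0) rfl rfl rfl (zero_add v)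
    have h2 := KK (y - w) 0 (y - w) v y (z + j w) y (z + j w) hvv rfl
    refine tr _ _ _ _ _ _ _ _ h2 (by ring) ?_ (by ring) ?_
    · rw [show y + 0 - (y - w) = w by ring]; ring
    · rw [show y + v - (y - w) = w + v by ring]; ring
  -- differences of D_v are uniform vertical shifts
  have VDIFF : ∀ v : (ZMod (2*p)), (∀ t u : (ZMod (2*p)), f (t, u) = f (t, u + v)) → ∀ w w' t u : (ZMod (2*p)),
      f (t, u) = f (t, u + ((j w - j (w + v)) - (j w' - j (w' + v)))) := by
    intro v hv w w' t u
    have h1 := HOR v hv t u w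
    have h2 := HOR v hv t (u + ((j w - j (w + v)) - (j w' - j (w' + v)))) w'
    have h2' := tr _ _ _ _ (t + v) (u + (j w - j (w + v))) t
      (u + ((j w - j (w + v)) - (j w' - j (w' + v)))) h2.symm (by ring) (by ring) rfl rfl
    exact h1.trans h2'
  -- vertical shifts add
  have VADD : ∀ v v' : (ZMod (2*p)), (∀ t u : (ZMod (2*p)), f (t, u) = f (t, u + v)) →
      (∀ t u : (ZMod (2*p)), f (t, u) = f (t, u + v')) → ∀ t u : (ZMod (2*p)), f (t, u) = f (t, u + (v + v')) := by
    intro v v' hv hv' t u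
    exact (hv t u).trans (tr _ _ _ _ _ _ _ _ (hv' t (u + v)) rfl rfl rfl (by ring))
  -- nsmul
  have VNSMUL : ∀ v : (ZMod (2*p)), (∀ t u : (ZMod (2*p)), f (t, u) = f (t, u + v)) → ∀ n : ℕ, ∀ t u : (ZMod (2*p)),
      f (t, u) = f (t, u + n • v) := by
    intro v hv n
    induction n with
    | zero =>
        intro t u
        exact tr _ _ _ _ _ _ _ _ (rfl : f (t,u) = f (t,u)) rfl rfl rfl (by simp)
    | succ m ih =>
        intro t u
        refine (ih t u).trans (tr _ _ _ _ _ _ _ _ (hv t (u + m • v)) rfl rfl rfl ?_)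
        rw [succ_nsmul]; ring
  -- collapse from a unit vertical shift
  have CUNIT : ∀ v : (ZMod (2*p)), (∀ t u : (ZMod (2*p)), f (t, u) = f (t, u + v)) → IsUnit v →
      ∀ t u u' : (ZMod (2*p)), f (t, u) = f (t, u') := by
    intro v hv hu t u u'
    obtain ⟨w, hw⟩ := IsUnit.exists_left_inv hu
    have h := VNSMUL v hv ((u' - u) * w).val t u
    refine tr _ _ _ _ _ _ _ _ h rfl rfl rfl ?_
    rw [nsmul_eq_mul, ZMod.natCast_zmod_val]
    linear_combination (u' - u) * hw
  -- collapse from vertical shift p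
  have hjp' : j ((p:(ZMod (2*p)))) = - j 0 := by
    have := hSH 0; rwa [add_zero] at this
  have CP : (∀ t u : (ZMod (2*p)), f (t, u) = f (t, u + (p : (ZMod (2*p))))) → ∀ t u u' : (ZMod (2*p)), f (t, u) = f (t, u') := by
    intro hv
    have hG := VDIFF (p : (ZMod (2*p))) hv 0 1
    have hGval : (j 0 - j (0 + (p:(ZMod (2*p))))) - (j 1 - j (1 + (p:(ZMod (2*p))))) = 2 * (2 * (k:(ZMod (2*p)))) - 2 := by
      rw [zero_add, hjp', add_comm (1:(ZMod (2*p))) ((p:(ZMod (2*p)))), hSH 1, hjz, hj1v]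
      ring
    have hG' : ∀ t u : (ZMod (2*p)), f (t, u) = f (t, u + (2 * (2 * (k:(ZMod (2*p)))) - 2)) := by
      intro t u
      exact tr _ _ _ _ _ _ _ _ (hG t u) rfl rfl rfl (by rw [hGval])
    have hGcast : ((4*k - 2 : ℕ) : (ZMod (2*p))) = 2 * (2 * (k:(ZMod (2*p)))) - 2 := by
      rw [Nat.cast_sub (by omega : 2 ≤ 4*k)]
      push_cast; ring
    have hGne : (2 * (2 * (k:(ZMod (2*p)))) - 2) ≠ 0 := by
      rw [← hGcast]
      exact cast_ne_zero' p hp3 (by omega) (by omega)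
    have hparG : par p (2 * (2 * (k:(ZMod (2*p)))) - 2) = 0 := by
      have key : ∀ x : ZMod 2, 2 * (2 * x) - 2 = 0 := by decide
      simp only [map_sub, map_mul, map_ofNat, par_nat]
      exact key _
    have hPG := VADD (p:(ZMod (2*p))) (2 * (2 * (k:(ZMod (2*p)))) - 2) hv hG'
    have hunit : IsUnit ((p:(ZMod (2*p))) + (2 * (2 * (k:(ZMod (2*p)))) - 2)) := by
      refine isunit _ ?_ ?_
      · rw [map_add, hparp, hparG]; decide
      · intro h
        exact hGne (by linear_combination h)
    exact CUNIT _ hPG hunit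
  -- collapse from any nonzero vertical shift
  have CVERT : ∀ v : (ZMod (2*p)), v ≠ 0 → (∀ t u : (ZMod (2*p)), f (t, u) = f (t, u + v)) →
      ∀ t u u' : (ZMod (2*p)), f (t, u) = f (t, u') := by
    intro v hv0 hv
    by_cases hvp : v = (p : (ZMod (2*p)))
    · exact CP (hvp ▸ hv)
    · rcases zmod2_cases (par p v) with hpar | hpar
      · obtain ⟨w₀, hw0par, hw0ne, hw0np, hwv0, hwvp⟩ :
            ∃ w₀ : (ZMod (2*p)), par p w₀ = 0 ∧ w₀ ≠ 0 ∧ w₀ ≠ (p:(ZMod (2*p))) ∧ w₀ + v ≠ 0 ∧ w₀ + v ≠ (p:(ZMod (2*p))) := by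
          by_cases h2v : (2:(ZMod (2*p))) + v = 0
          · refine ⟨4, par4, h4ne, h4np, ?_, ?_⟩
            · intro h; exact h24 (by linear_combination h2v - h)
            · intro h; apply par01
              rw [← hparp, ← h, map_add, par4, hpar, zero_add]
          · refine ⟨2, par2, h2ne, h2np, h2v, ?_⟩
            intro h; apply par01
            rw [← hparp, ← h, map_add, par2, hpar, zero_add]
        have hO := VDIFF v hv 0 w₀
        have hparo : par p ((j 0 - j (0 + v)) - (j w₀ - j (w₀ + v))) = 1 := by
          rw [zero_add, map_sub, map_sub, map_sub, hPHI0,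
            hPHI v hv0 hvp, hPHI w₀ hw0ne hw0np, hPHI (w₀ + v) hwv0 hwvp]
          decide
        by_cases hop : (j 0 - j (0 + v)) - (j w₀ - j (w₀ + v)) = (p : (ZMod (2*p)))
        · exact CP (fun t u => tr _ _ _ _ _ _ _ _ (hO t u) rfl rfl rfl (by rw [hop]))
        · exact CUNIT _ (hO) (isunit _ hparo hop)
      · exact CUNIT v hv (isunit v hpar hvp)
  -- main: a pair with horizontal difference not in {0,p} gives collapse
  have MAIN : ∀ a1 a2 b1 b2 : (ZMod (2*p)), f (a1,a2) = f (b1,b2) → b1 - a1 ≠ 0 → b1 - a1 ≠ (p:(ZMod (2*p))) →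
      ∀ t u u' : (ZMod (2*p)), f (t, u) = f (t, u') := by
    intro a1 a2 b1 b2 h he0 hep
    have h2e0 : 2 * (b1 - a1) ≠ 0 := by
      intro hcontra
      have hval : ((2 * (b1 - a1).val : ℕ) : (ZMod (2*p))) = 0 := by
        push_cast [ZMod.natCast_zmod_val]
        linear_combination hcontra
      rw [ZMod.natCast_eq_zero_iff] at hval
      obtain ⟨c, hc⟩ := hval
      have hev : (b1 - a1).val < 2*p := ZMod.val_lt (b1 - a1)
      have hee : b1 - a1 = (((b1 - a1).val : ℕ) : (ZMod (2*p))) := (ZMod.natCast_zmod_val (b1-a1)).symm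
      rcases c with _ | _ | c
      · apply he0
        rw [hee]
        have hz : (b1 - a1).val = 0 := by omega
        rw [hz]; simp
      · apply hep
        rw [hee]
        have hz : (b1 - a1).val = p := by omega
        rw [hz]
      · have h4 : 2*p*2 ≤ 2*p*(c+1+1) := Nat.mul_le_mul_left _ (by omega)
        rw [← hc] at h4
        omega
    have hpar2e : par p (2 * (b1 - a1)) = 0 := by
      have key : ∀ x : ZMod 2, 2 * x = 0 := by decide
      rw [map_mul, map_ofNat]
      exact key _
    have h2ep : 2 * (b1 - a1) ≠ (p : (ZMod (2*p))) := fun hh => par01 (by rw [← hpar2e, hh, hparp])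
    obtain ⟨w₀, hw0par, hw0ne, hw0np, hwv0, hwvp⟩ :
        ∃ w₀ : (ZMod (2*p)), par p w₀ = 0 ∧ w₀ ≠ 0 ∧ w₀ ≠ (p:(ZMod (2*p))) ∧
          w₀ + 2*(b1 - a1) ≠ 0 ∧ w₀ + 2*(b1 - a1) ≠ (p:(ZMod (2*p))) := by
      by_cases h2v : (2:(ZMod (2*p))) + 2*(b1 - a1) = 0
      · refine ⟨4, par4, h4ne, h4np, ?_, ?_⟩
        · intro hh; exact h24 (by linear_combination h2v - hh)
        · intro hh; apply par01
          rw [← hparp, ← hh, map_add, par4, hpar2e, zero_add]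
      · refine ⟨2, par2, h2ne, h2np, h2v, ?_⟩
        intro hh; apply par01
        rw [← hparp, ← hh, map_add, par2, hpar2e, zero_add]
    have h1 := ACT2 a1 a2 b1 b2 h 0 0 ((p:(ZMod (2*p))) - 2*(b1 - a1))
    have h2 := ACT2 a1 a2 b1 b2 h 0 w₀ ((p:(ZMod (2*p))) - w₀ - 2*(b1 - a1))
    have h1' : f (0, a2 - (j 0 - j (2*(b1 - a1)))) = f (0 + (b1 - a1), b2) := by
      refine tr _ _ _ _ _ _ _ _ h1 rfl ?_ rfl ?_
      · rw [hSUB (2*(b1 - a1))]; ring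
      · rw [zero_add (b1 - a1), show (p:(ZMod (2*p))) - 2*(b1 - a1) + (b1 - a1) = (p:(ZMod (2*p))) - (b1 - a1) by ring,
          hSUB (b1 - a1)]
        ring
    have h2' : f (0, a2 - (j w₀ - j (w₀ + 2*(b1 - a1)))) = f (0 + (b1 - a1), b2) := by
      refine tr _ _ _ _ _ _ _ _ h2 rfl ?_ rfl ?_
      · rw [show (p:(ZMod (2*p))) - w₀ - 2*(b1 - a1) = (p:(ZMod (2*p))) - (w₀ + 2*(b1 - a1)) by ring,
          hSUB (w₀ + 2*(b1 - a1))]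
        ring
      · rw [show (p:(ZMod (2*p))) - w₀ - 2*(b1 - a1) + (b1 - a1) = (p:(ZMod (2*p))) - (w₀ + (b1 - a1)) by ring,
          hSUB (w₀ + (b1 - a1))]
        ring
    have hpair := h1'.trans h2'.symm
    have hδ : ∀ t u : (ZMod (2*p)), f (t, u) =
        f (t, u + ((j 0 - j (2*(b1 - a1))) - (j w₀ - j (w₀ + 2*(b1 - a1))))) := by
      intro t u
      have := VSTEP 0 (a2 - (j 0 - j (2*(b1 - a1)))) (a2 - (j w₀ - j (w₀ + 2*(b1 - a1)))) hpair t u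
      exact tr _ _ _ _ _ _ _ _ this rfl rfl rfl (by ring)
    have hparδ : par p ((j 0 - j (2*(b1 - a1))) - (j w₀ - j (w₀ + 2*(b1 - a1)))) = 1 := by
      rw [map_sub, map_sub, map_sub, hPHI0, hPHI (2*(b1 - a1)) h2e0 h2ep,
        hPHI w₀ hw0ne hw0np, hPHI (w₀ + 2*(b1 - a1)) hwv0 hwvp]
      decide
    have hδ0 : ((j 0 - j (2*(b1 - a1))) - (j w₀ - j (w₀ + 2*(b1 - a1)))) ≠ 0 := by
      intro hcontra
      apply par01
      rw [← hparδ, hcontra, map_zero]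
    exact CVERT _ hδ0 hδ
  -- from column collapse to full collapse
  have FIN : (∀ t u u' : (ZMod (2*p)), f (t, u) = f (t, u')) → ∀ q q' : (ZMod (2*p)) × (ZMod (2*p)), f q = f q' := by
    intro hC q q'
    have h2 := KK 0 q.1 0 q'.1 0 (q.2 + j q.1) 0 (q.2 + j q.1) (hC 0 q.1 q'.1) rfl
    have h3 : f (q.1, q.2) = f (q'.1, q.2 + j q.1 - j q'.1) := by
      refine tr _ _ _ _ _ _ _ _ h2 (by ring) ?_ (by ring) ?_
      · rw [show (0:(ZMod (2*p))) + q.1 - 0 = q.1 by ring]; ring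
      · rw [show (0:(ZMod (2*p))) + q'.1 - 0 = q'.1 by ring]
    exact h3.trans (hC q'.1 (q.2 + j q.1 - j q'.1) q'.2)
  -- case analysis on the initial pair
  have hab' : f (a.1, a.2) = f (b.1, b.2) := hfab
  by_cases he0 : b.1 - a.1 = 0
  · have hb1 : b.1 = a.1 := sub_eq_zero.mp he0
    have hd : b.2 - a.2 ≠ 0 := by
      intro hcontra
      exact hab (Prod.ext_iff.mpr ⟨hb1.symm, (sub_eq_zero.mp hcontra).symm⟩)
    rw [hb1] at hab'
    exact FIN (CVERT (b.2 - a.2) hd (VSTEP a.1 a.2 b.2 hab'))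
  · by_cases hep : b.1 - a.1 = (p : (ZMod (2*p)))
    · obtain ⟨σ, hσ0, hσp⟩ : ∃ σ : (ZMod (2*p)), (b.2 - a.2) + 2*σ ≠ 0 ∧ (b.2 - a.2) + 2*σ ≠ (p:(ZMod (2*p))) := by
        by_cases hd0 : b.2 - a.2 = 0
        · refine ⟨1, ?_, ?_⟩
          · rw [hd0]; intro hh; exact h2ne (by linear_combination hh)
          · rw [hd0]; intro hh; exact h2np (by linear_combination hh)
        · by_cases hdp : b.2 - a.2 = (p:(ZMod (2*p)))
          · refine ⟨1, ?_, ?_⟩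
            · rw [hdp]; intro hh
              apply par01
              have hh2 := congrArg (par p) hh
              rw [map_add, hparp, map_mul, map_ofNat, map_one, map_zero] at hh2
              rw [← hh2]; decide
            · rw [hdp]; intro hh
              exact h2ne (by linear_combination hh)
          · exact ⟨0, fun hh => hd0 (by linear_combination hh),
              fun hh => hdp (by linear_combination hh)⟩
      obtain ⟨w, v, hwv⟩ := hcov σ
      have hstep := ACT2 a.1 a.2 b.1 b.2 hab' 0 w v
      rw [hep] at hstep
      have hP : f (0, a.2 - σ) = f (0 + (p:(ZMod (2*p))), b.2 + σ) := by
        refine tr _ _ _ _ _ _ _ _ hstep rfl (by rw [hwv]) rfl ?_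
        rw [add_comm w ((p:(ZMod (2*p)))), add_comm v ((p:(ZMod (2*p)))), hSH w, hSH v, ← hwv]
        ring
      have hQ := KK 0 (a.2 - σ) (0 + (p:(ZMod (2*p)))) (b.2 + σ) 0 0 0 0 hP rfl
      refine FIN (MAIN _ _ _ _ hQ ?_ ?_)
      · intro hh; exact hσ0 (by linear_combination hh)
      · intro hh; exact hσp (by linear_combination hh)
    · exact FIN (MAIN a.1 a.2 b.1 b.2 hab' he0 hep)
end simple

/-- for a prime p = 2k+1 with k odd, A = ℤ/(2p) and the family j given by
j_i = -j_{p-i} = -j_{p+i} = j_{2p-i} = 2i-1 for 1 ≤ i ≤ k and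
j_0 = -j_p = -2 Σ_{i=1}^k (-1)^i j_i, one has j_0 = 2k, j_a = j_{-a} for all a,
V_u = A for every nonzero u, and the associated solution (A², r) is simple. -/
theorem statement18 (k p : ℕ) (hk : Odd k) (hp : p = 2 * k + 1) (hpp : p.Prime)
    (j : ZMod (2 * p) → ZMod (2 * p))
    (hj1 : ∀ i : ℕ, 1 ≤ i → i ≤ k →
      j (i : ZMod (2 * p)) = 2 * (i : ZMod (2 * p)) - 1 ∧
      j ((p : ZMod (2 * p)) - (i : ZMod (2 * p))) = -(2 * (i : ZMod (2 * p)) - 1) ∧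
      j ((p : ZMod (2 * p)) + (i : ZMod (2 * p))) = -(2 * (i : ZMod (2 * p)) - 1) ∧
      j (((2 * p : ℕ) : ZMod (2 * p)) - (i : ZMod (2 * p))) = 2 * (i : ZMod (2 * p)) - 1)
    (hj0 : j 0 = -2 * ∑ i ∈ Finset.Icc 1 k, (-1 : ZMod (2 * p)) ^ i * j (i : ZMod (2 * p)))
    (hjp : j (p : ZMod (2 * p)) = -j 0) :
    j 0 = 2 * (k : ZMod (2 * p)) ∧
    (∀ a : ZMod (2 * p), j (-a) = j a) ∧
    (∀ u : ZMod (2 * p), u ≠ 0 → (⨆ n : ℕ, Vchain j u n) = ⊤) ∧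
    IsSimpleSol (rj j) := by
  haveI : NeZero (2*p) := ⟨by omega⟩
  have hk1 : 1 ≤ k := hk.pos
  have hjz : j 0 = 2 * (k : ZMod (2*p)) := jzero k p j hk hp hj1 hj0
  have hj1v : j 1 = 1 := by
    have h := (hj1 1 le_rfl hk1).1
    rw [Nat.cast_one] at h
    rw [h]; ring
  refine ⟨hjz, jneg k p j hp hj1, vtop k p j hk hp hpp hj1 hjp hjz, ?_, ?_⟩
  · haveI : Fact (1 < 2*p) := ⟨by omega⟩
    exact ⟨(0,0), (1,0), fun h => zero_ne_one (congrArg Prod.fst h)⟩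
  · intro Y s _hs f hfhom hsurj
    by_cases hinj : Function.Injective f
    · exact Or.inl ⟨hinj, hsurj⟩
    · refine Or.inr ?_
      rw [Function.not_injective_iff] at hinj
      obtain ⟨a, b, hfab, hab⟩ := hinj
      have coll := collapse_lemma k p j s f hk1 hp hpp
        (cov k p j hk hp hj1 hjp hjz)
        (jp_shift k p j hp hj1 hjp)
        (jp_sub k p j hp hj1 hjp)
        (jphi k p j hp hj1)
        (par_two_k k p j hjz)
        (par_p k p hp)
        hjz hj1v hfhom a b hfab hab
      exact ⟨fun y1 y2 => by
        obtain ⟨q, rfl⟩ := hsurj y1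
        obtain ⟨q', rfl⟩ := hsurj y2
        exact coll q q'⟩
end

section
/- Let A = Z/(2p) with p = 2k+1 prime, k odd, and (j_a) as in the previous construction (j_i = 2i-1 for 1 ≤ i ≤ k, extended by j_{p-i} = j_{p+i} = -(2i-1), j_{2p-i} = 2i-1, j_0 = 2k, j_p = -2k). Then for all u ∈ Z/(2p): Σ_{i=-k}^{k} (-1)^i j_{u+i} = 0. Consequently σ_{(-k,0)}^{(-1)^k} ⋯ σ_{(-1,0)}^{-1} σ_{(0,0)}² σ_{(1,0)}^{-1} ⋯ σ_{(k,0)}^{(-1)^k}(u,v) = (u, v - j_u) = σ_{(0,0)}(u,v) for all u,v. -/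
lemma sigma_pow_nat' {A : Type} [AddCommGroup A] (j : A → A) (a : A) (n : ℕ) (c : A × A) :
    ((sigmaPerm j (a,0)) ^ n) c = (c.1, c.2 - n • j (c.1 - a)) := by
  induction n generalizing c with
  | zero => simp
  | succ n ih =>
    rw [pow_succ', Equiv.Perm.mul_apply, ih]
    show sigmaFun j (a,0) _ = _
    simp only [sigmaFun, add_zero, succ_nsmul, Prod.mk.injEq]
    exact ⟨trivial, by abel⟩

lemma sigma_zpow' {A : Type} [AddCommGroup A] (j : A → A) (a : A) (z : ℤ) (c : A × A) :
    ((sigmaPerm j (a,0)) ^ z) c = (c.1, c.2 - z • j (c.1 - a)) := by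
  cases z with
  | ofNat n => simpa using sigma_pow_nat' j a n c
  | negSucc n =>
    rw [zpow_negSucc, Equiv.Perm.inv_eq_iff_eq, sigma_pow_nat']
    refine Prod.ext rfl ?_
    show c.2 = _
    simp [Int.negSucc_eq, sub_eq_add_neg]
    module

lemma sigma_prod' {A : Type} [AddCommGroup A] (j : A → A) (e : ℕ → ℤ) (g : ℕ → A)
    (L : List ℕ) (u v : A) :
    ((L.map fun t => (sigmaPerm j (g t, 0)) ^ (e t)).prod (u, v))
      = (u, v - (L.map fun t => e t • j (u - g t)).sum) := by
  induction L with
  | nil => simp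
  | cons x L ih =>
    rw [List.map_cons, List.prod_cons, Equiv.Perm.mul_apply, ih, sigma_zpow']
    simp only [List.map_cons, List.sum_cons, Prod.mk.injEq]
    exact ⟨trivial, by abel⟩

lemma symm_sum' {M : Type*} [AddCommMonoid M] (m : ℕ) (f : ℤ → M) :
    ∑ i ∈ Finset.Icc (-(m:ℤ)) m, f i
      = f 0 + ∑ i ∈ Finset.range m, (f (i+1) + f (-(i+1))) := by
  induction m with
  | zero => simp
  | succ m ih =>
    have h1 : Finset.Icc (-(m+1:ℤ)) (m+1) =
        insert (-(m+1:ℤ)) (insert ((m:ℤ)+1) (Finset.Icc (-(m:ℤ)) m)) := by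
      ext x; simp [Finset.mem_Icc]; omega
    have h2 : (-(m+1:ℤ)) ∉ insert ((m:ℤ)+1) (Finset.Icc (-(m:ℤ)) m) := by
      simp [Finset.mem_Icc]; omega
    have h3 : ((m:ℤ)+1) ∉ Finset.Icc (-(m:ℤ)) m := by simp
    push_cast [h1, Finset.sum_insert h2, Finset.sum_insert h3, ih, Finset.sum_range_succ]
    abel

lemma shift_sum' {M : Type*} [AddCommMonoid M] (a b : ℤ) (f : ℤ → M) :
    ∑ i ∈ Finset.Icc a b, f (i+1) = ∑ i ∈ Finset.Icc (a+1) (b+1), f i := by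
  rw [← Finset.map_add_right_Icc, Finset.sum_map]
  rfl

lemma altsum_int' : ∀ m : ℕ, ∑ i ∈ Finset.range m, (-1:ℤ)^(i+1) * (2*(i+1)-1) = (-1)^m * m := by
  intro m
  induction m with
  | zero => simp
  | succ m ih =>
    rw [Finset.sum_range_succ, ih, pow_succ]
    push_cast
    ring

/-- with A = ℤ/(2p), p = 2k+1 prime, k odd, and the family j as in the
previous construction, the alternating sum Σ_{i=-k}^{k} (-1)^i j_{u+i} vanishes for
every u, and consequently
σ_{(-k,0)}^{(-1)^k} ⋯ σ_{(-1,0)}⁻¹ σ_{(0,0)}² σ_{(1,0)}⁻¹ ⋯ σ_{(k,0)}^{(-1)^k}(u,v)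
= (u, v - j_u) = σ_{(0,0)}(u,v) for all u, v. -/
theorem statement19 (k p : ℕ) (hk : Odd k) (hp : p = 2 * k + 1) (hpp : p.Prime)
    (j : ZMod (2 * p) → ZMod (2 * p))
    (hjsym : ∀ a : ZMod (2 * p), j (-a) = j a)
    (hj1 : ∀ i : ℕ, 1 ≤ i → i ≤ k →
      j (i : ZMod (2 * p)) = 2 * (i : ZMod (2 * p)) - 1 ∧
      j ((p : ZMod (2 * p)) - (i : ZMod (2 * p))) = -(2 * (i : ZMod (2 * p)) - 1) ∧
      j ((p : ZMod (2 * p)) + (i : ZMod (2 * p))) = -(2 * (i : ZMod (2 * p)) - 1) ∧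
      j (((2 * p : ℕ) : ZMod (2 * p)) - (i : ZMod (2 * p))) = 2 * (i : ZMod (2 * p)) - 1)
    (hj0 : j 0 = 2 * (k : ZMod (2 * p)))
    (hjp : j (p : ZMod (2 * p)) = -(2 * (k : ZMod (2 * p)))) :
    (∀ u : ZMod (2 * p),
      ∑ i ∈ Finset.Icc (-(k : ℤ)) (k : ℤ),
        (if Even i then (1 : ZMod (2 * p)) else -1) * j (u + (i : ZMod (2 * p))) = 0) ∧
    (∀ u v : ZMod (2 * p),
      (((List.range (2 * k + 1)).map fun t : ℕ =>
          (sigmaPerm j ((((t : ℤ) - (k : ℤ) : ℤ) : ZMod (2 * p)), 0)) ^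
            (if (t : ℤ) - (k : ℤ) = 0 then (2 : ℤ)
              else (-1 : ℤ) ^ ((t : ℤ) - (k : ℤ)).natAbs)).prod (u, v)
        = (u, v - j u) ∧
      ((u, v - j u) : ZMod (2 * p) × ZMod (2 * p)) = sigmaPerm j (0, 0) (u, v))) := by
  
  have hppos := hpp.pos
  haveI : NeZero (2 * p) := ⟨by omega⟩
  have hpcast : (p : ZMod (2 * p)) = 2 * (k : ZMod (2 * p)) + 1 := by
    rw [hp]; push_cast; ring
  have jshift : ∀ a : ZMod (2 * p), j (a + (p : ZMod (2 * p))) = - j a := by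
    intro a
    have hn : a.val < 2 * p := ZMod.val_lt a
    have ha : ((a.val : ℕ) : ZMod (2 * p)) = a := ZMod.natCast_rightInverse a
    set n := a.val with hndef
    have hcase : n = 0 ∨ (1 ≤ n ∧ n ≤ k) ∨ (k + 1 ≤ n ∧ n ≤ 2 * k) ∨ n = p ∨
        (p + 1 ≤ n ∧ n ≤ p + k) ∨ (p + k + 1 ≤ n ∧ n ≤ 2 * p - 1) := by omega
    rcases hcase with h | ⟨h1, h2⟩ | ⟨h1, h2⟩ | h | ⟨h1, h2⟩ | ⟨h1, h2⟩
    · have ha0 : a = 0 := by rw [← ha, h]; simp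
      rw [ha0, zero_add, hjp, hj0]
    · obtain ⟨e1, e2, e3, e4⟩ := hj1 n h1 h2
      rw [← ha, add_comm, e3, e1]
    · obtain ⟨e1, e2, e3, e4⟩ := hj1 (p - n) (by omega) (by omega)
      have han : a = (p : ZMod (2 * p)) - ((p - n : ℕ) : ZMod (2 * p)) := by
        rw [← ha]
        rw [← Nat.cast_sub (show p - n ≤ p by omega)]
        congr 1; omega
      rw [han]
      have harg : (p : ZMod (2 * p)) - ((p - n : ℕ) : ZMod (2 * p)) + p
          = ((2 * p : ℕ) : ZMod (2 * p)) - ((p - n : ℕ) : ZMod (2 * p)) := by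
        push_cast; ring
      rw [harg, e4, e2, neg_neg]
    · have hap : a = (p : ZMod (2 * p)) := by rw [← ha, h]
      have h2p : (p : ZMod (2 * p)) + p = 0 := by
        rw [← Nat.cast_add, show p + p = 2 * p by ring, ZMod.natCast_self]
      rw [hap, h2p, hj0, hjp, neg_neg]
    · obtain ⟨e1, e2, e3, e4⟩ := hj1 (n - p) (by omega) (by omega)
      have han : a = (p : ZMod (2 * p)) + ((n - p : ℕ) : ZMod (2 * p)) := by
        rw [← ha, ← Nat.cast_add]; congr 1; omega
      rw [han]
      have harg : (p : ZMod (2 * p)) + ((n - p : ℕ) : ZMod (2 * p)) + p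
          = ((n - p : ℕ) : ZMod (2 * p)) := by
        have hz : ((2 * p : ℕ) : ZMod (2 * p)) = 0 := ZMod.natCast_self _
        calc (p : ZMod (2 * p)) + ((n - p : ℕ) : ZMod (2 * p)) + p
            = ((2 * p : ℕ) : ZMod (2 * p)) + ((n - p : ℕ) : ZMod (2 * p)) := by push_cast; ring
          _ = ((n - p : ℕ) : ZMod (2 * p)) := by rw [hz, zero_add]
      rw [harg, e1, e3, neg_neg]
    · obtain ⟨e1, e2, e3, e4⟩ := hj1 (2 * p - n) (by omega) (by omega)
      have han : a = ((2 * p : ℕ) : ZMod (2 * p)) - ((2 * p - n : ℕ) : ZMod (2 * p)) := by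
        rw [← ha, ← Nat.cast_sub (by omega)]; congr 1; omega
      rw [han]
      have harg : ((2 * p : ℕ) : ZMod (2 * p)) - ((2 * p - n : ℕ) : ZMod (2 * p)) + p
          = (p : ZMod (2 * p)) - ((2 * p - n : ℕ) : ZMod (2 * p)) := by
        rw [ZMod.natCast_self]; ring
      rw [harg, e2, e4]
  have hS0 : ∑ i ∈ Finset.Icc (-(k : ℤ)) (k : ℤ),
      (if Even i then (1 : ZMod (2 * p)) else -1) * j ((0:ZMod (2*p)) + (i : ZMod (2 * p))) = 0 := by
    rw [symm_sum' k (fun i => (if Even i then (1 : ZMod (2 * p)) else -1) * j ((0:ZMod (2*p)) + (i : ZMod (2 * p))))]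
    have hterm : ∀ i ∈ Finset.range k,
        ((if Even ((i:ℤ)+1) then (1 : ZMod (2 * p)) else -1) * j ((0:ZMod (2*p)) + (((i:ℤ)+1 : ℤ) : ZMod (2 * p)))
          + (if Even (-((i:ℤ)+1)) then (1 : ZMod (2 * p)) else -1) * j ((0:ZMod (2*p)) + ((-((i:ℤ)+1) : ℤ) : ZMod (2 * p))))
        = ((2 * ((-1:ℤ)^(i+1) * (2*(i+1)-1)) : ℤ) : ZMod (2*p)) := by
      intro i hi
      have hik : i + 1 ≤ k := Finset.mem_range.mp hi
      obtain ⟨e1, _, _, _⟩ := hj1 (i+1) (by omega) hik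
      have hc1 : (((i:ℤ)+1 : ℤ) : ZMod (2 * p)) = ((i+1 : ℕ) : ZMod (2*p)) := by push_cast; ring
      have hc2 : ((-((i:ℤ)+1) : ℤ) : ZMod (2 * p)) = -((i+1 : ℕ) : ZMod (2*p)) := by push_cast; ring
      rw [hc1, hc2, zero_add, zero_add, hjsym, e1]
      simp only [even_neg]
      rcases Nat.even_or_odd (i+1) with he | ho
      · have he' : Even ((i:ℤ)+1) := by exact_mod_cast he
        have hp1 : (-1:ℤ)^(i+1) = 1 := he.neg_one_pow
        simp only [he', if_pos, hp1]
        push_cast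
        ring
      · have ho' : ¬ Even ((i:ℤ)+1) := by
          rw [Int.not_even_iff_odd]; exact_mod_cast ho
        have hp1 : (-1:ℤ)^(i+1) = -1 := ho.neg_one_pow
        simp only [ho', if_neg, if_false, hp1]
        push_cast
        ring
    rw [Finset.sum_congr rfl hterm]
    have hsum : ∑ i ∈ Finset.range k, ((2 * ((-1:ℤ)^(i+1) * (2*(i+1)-1)) : ℤ) : ZMod (2*p))
        = ((2 * ((-1:ℤ)^k * k) : ℤ) : ZMod (2*p)) := by
      rw [← Int.cast_sum, ← Finset.mul_sum, altsum_int' k]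
    rw [hsum, hk.neg_one_pow]
    push_cast
    norm_num [hj0]
  have hSstep : ∀ u : ZMod (2 * p),
      (∑ i ∈ Finset.Icc (-(k : ℤ)) (k : ℤ),
        (if Even i then (1 : ZMod (2 * p)) else -1) * j ((u + 1) + (i : ZMod (2 * p))))
      = - ∑ i ∈ Finset.Icc (-(k : ℤ)) (k : ℤ),
        (if Even i then (1 : ZMod (2 * p)) else -1) * j (u + (i : ZMod (2 * p))) := by
    intro u
    have key : ∀ i ∈ Finset.Icc (-(k : ℤ)) (k : ℤ),
        (if Even i then (1 : ZMod (2 * p)) else -1) * j ((u + 1) + (i : ZMod (2 * p)))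
        = - ((fun i : ℤ => (if Even i then (1 : ZMod (2 * p)) else -1)
              * j (u + (i : ZMod (2 * p)))) (i + 1)) := by
      intro i _
      simp only
      have hc : ((i + 1 : ℤ) : ZMod (2 * p)) = (i : ZMod (2 * p)) + 1 := by push_cast; ring
      rw [hc, show (u + 1) + (i : ZMod (2 * p)) = u + ((i : ZMod (2 * p)) + 1) by ring]
      rcases Int.even_or_odd i with he | ho
      · have h1 : ¬ Even (i + 1) := by simp [Int.even_add_one, he]
        simp [he, h1]
      · have he0 : ¬ Even i := by rw [Int.not_even_iff_odd]; exact ho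
        have h1 : Even (i + 1) := by simp [Int.even_add_one, he0]; exact ho
        simp [he0, h1]
    rw [Finset.sum_congr rfl key, Finset.sum_neg_distrib, neg_inj,
      shift_sum' (-(k:ℤ)) (k:ℤ) (fun i : ℤ => (if Even i then (1 : ZMod (2 * p)) else -1)
        * j (u + (i : ZMod (2 * p))))]
    have herase1 : (Finset.Icc (-(k:ℤ)) ((k:ℤ)+1)).erase (-(k:ℤ))
        = Finset.Icc (-(k:ℤ)+1) ((k:ℤ)+1) := by
      ext x; simp [Finset.mem_Icc, Finset.mem_erase]
    have herase2 : (Finset.Icc (-(k:ℤ)) ((k:ℤ)+1)).erase ((k:ℤ)+1)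
        = Finset.Icc (-(k:ℤ)) (k:ℤ) := by
      ext x; simp [Finset.mem_Icc, Finset.mem_erase]
    have hgg : (if Even (-(k:ℤ)) then (1 : ZMod (2 * p)) else -1) * j (u + ((-(k:ℤ) : ℤ) : ZMod (2 * p)))
        = (if Even ((k:ℤ)+1) then (1 : ZMod (2 * p)) else -1) * j (u + (((k:ℤ)+1 : ℤ) : ZMod (2 * p))) := by
      have hok : Odd (k:ℤ) := by exact_mod_cast hk
      have hoddk : ¬ Even (-(k:ℤ)) := by
        rw [even_neg, Int.not_even_iff_odd]; exact hok
      have hevk1 : Even ((k:ℤ)+1) := hok.add_one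
      have hargeq : u + (((k:ℤ)+1 : ℤ) : ZMod (2 * p))
          = (u + ((-(k:ℤ) : ℤ) : ZMod (2 * p))) + (p : ZMod (2 * p)) := by
        push_cast
        rw [hpcast]
        ring
      rw [hargeq, jshift]
      simp only [hoddk, hevk1, if_true, if_false, if_neg, if_pos]
      ring
    have A := Finset.add_sum_erase (Finset.Icc (-(k:ℤ)) ((k:ℤ)+1))
      (fun i : ℤ => (if Even i then (1 : ZMod (2 * p)) else -1) * j (u + (i : ZMod (2 * p))))
      (show (-(k:ℤ)) ∈ Finset.Icc (-(k:ℤ)) ((k:ℤ)+1) by simp [Finset.mem_Icc]; omega)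
    have B := Finset.add_sum_erase (Finset.Icc (-(k:ℤ)) ((k:ℤ)+1))
      (fun i : ℤ => (if Even i then (1 : ZMod (2 * p)) else -1) * j (u + (i : ZMod (2 * p))))
      (show ((k:ℤ)+1) ∈ Finset.Icc (-(k:ℤ)) ((k:ℤ)+1) by simp [Finset.mem_Icc]; omega)
    rw [herase1] at A
    rw [herase2] at B
    have C := A.trans B.symm
    beta_reduce at C
    rw [hgg] at C
    exact add_left_cancel C
  have hSall : ∀ u : ZMod (2 * p),
      ∑ i ∈ Finset.Icc (-(k : ℤ)) (k : ℤ),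
        (if Even i then (1 : ZMod (2 * p)) else -1) * j (u + (i : ZMod (2 * p))) = 0 := by
    intro u
    have hnat : ∀ n : ℕ, ∑ i ∈ Finset.Icc (-(k : ℤ)) (k : ℤ),
        (if Even i then (1 : ZMod (2 * p)) else -1)
          * j (((n : ℕ) : ZMod (2*p)) + (i : ZMod (2 * p))) = 0 := by
      intro n
      induction n with
      | zero => simpa using hS0
      | succ n ih =>
        have hc : ((n + 1 : ℕ) : ZMod (2 * p)) = ((n : ℕ) : ZMod (2 * p)) + 1 := by push_cast; ring
        rw [hc, hSstep, ih, neg_zero]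
    have := hnat u.val
    rwa [ZMod.natCast_rightInverse u] at this
  refine ⟨hSall, fun u v => ⟨?_, ?_⟩⟩
  · rw [sigma_prod' j
      (fun t : ℕ => if (t : ℤ) - (k : ℤ) = 0 then (2 : ℤ) else (-1 : ℤ) ^ ((t : ℤ) - (k : ℤ)).natAbs)
      (fun t : ℕ => (((t : ℤ) - (k : ℤ) : ℤ) : ZMod (2 * p))) (List.range (2*k+1)) u v]
    refine Prod.ext rfl ?_
    show v - _ = v - j u
    rw [sub_right_inj]
    show ∑ t ∈ Finset.range (2*k+1),
      (if (t : ℤ) - (k : ℤ) = 0 then (2 : ℤ) else (-1 : ℤ) ^ ((t : ℤ) - (k : ℤ)).natAbs)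
        • j (u - (((t : ℤ) - (k : ℤ) : ℤ) : ZMod (2 * p))) = j u
    have hemb : Finset.Icc (-(k:ℤ)) (k:ℤ)
        = (Finset.range (2*k+1)).map ⟨fun t : ℕ => (t:ℤ) - k,
            fun a b h => by simp only [sub_left_inj, Nat.cast_inj] at h; exact h⟩ := by
      ext x
      simp only [Finset.mem_Icc, Finset.mem_map, Finset.mem_range, Function.Embedding.coeFn_mk, DFunLike.coe]
      constructor
      · rintro ⟨h1, h2⟩
        exact ⟨(x + k).toNat, by omega, by omega⟩
      · rintro ⟨a, ha, rfl⟩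
        omega
    have hS' : ∑ t ∈ Finset.range (2*k+1),
        (if Even ((t:ℤ)-(k:ℤ)) then (1 : ZMod (2*p)) else -1)
          * j (u - (((t:ℤ)-(k:ℤ) : ℤ) : ZMod (2*p))) = 0 := by
      have h1 := hSall u
      rw [hemb, Finset.sum_map] at h1
      simp only [Function.Embedding.coeFn_mk, DFunLike.coe] at h1
      have hGF : ∀ t ∈ Finset.range (2*k+1),
          (if Even ((t:ℤ)-(k:ℤ)) then (1 : ZMod (2*p)) else -1)
            * j (u - (((t:ℤ)-(k:ℤ) : ℤ) : ZMod (2*p)))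
          = (fun s : ℕ => (if Even ((s:ℤ)-(k:ℤ)) then (1 : ZMod (2*p)) else -1)
              * j (u + (((s:ℤ)-(k:ℤ) : ℤ) : ZMod (2*p)))) ((2*k+1) - 1 - t) := by
        intro t ht
        rw [Finset.mem_range] at ht
        simp only
        have hc : (((2*k+1) - 1 - t : ℕ) : ℤ) = 2*(k:ℤ) - t := by omega
        rw [hc]
        have hc2 : 2*(k:ℤ) - t - k = -((t:ℤ) - k) := by ring
        rw [hc2]
        simp only [even_neg, Int.cast_neg]
        rw [← sub_eq_add_neg]
      rw [Finset.sum_congr rfl hGF]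
      exact (Finset.sum_range_reflect (fun s : ℕ => (if Even ((s:ℤ)-(k:ℤ)) then (1 : ZMod (2*p)) else -1)
              * j (u + (((s:ℤ)-(k:ℤ) : ℤ) : ZMod (2*p)))) (2*k+1)).trans h1
    have hsplit : ∀ t ∈ Finset.range (2*k+1),
        (if (t : ℤ) - (k : ℤ) = 0 then (2 : ℤ) else (-1 : ℤ) ^ ((t : ℤ) - (k : ℤ)).natAbs)
          • j (u - (((t : ℤ) - (k : ℤ) : ℤ) : ZMod (2 * p)))
        = (if t = k then j u else 0)
          + (if Even ((t:ℤ)-(k:ℤ)) then (1 : ZMod (2*p)) else -1)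
              * j (u - (((t:ℤ)-(k:ℤ) : ℤ) : ZMod (2*p))) := by
      intro t _
      by_cases h : t = k
      · subst h
        simp [two_smul]
      · have h' : (t:ℤ) - k ≠ 0 := by omega
        rw [if_neg h', if_neg h, zero_add]
        rcases Int.even_or_odd ((t:ℤ)-k) with he | ho
        · rw [if_pos he, Even.neg_one_pow (Int.natAbs_even.mpr he), one_zsmul, one_mul]
        · rw [if_neg (by rw [Int.not_even_iff_odd]; exact ho),
            Odd.neg_one_pow (Int.natAbs_odd.mpr ho), neg_one_zsmul, neg_one_mul]
    rw [Finset.sum_congr rfl hsplit, Finset.sum_add_distrib, hS', add_zero,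
      Finset.sum_ite_eq' (Finset.range (2*k+1)) k (fun _ => j u)]
    rw [if_pos (by simp; omega)]
  · show _ = sigmaFun j (0,0) (u,v)
    simp [sigmaFun]
end
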